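/- arXiv:math/0306133 — 4 statements merged into one kernel-verified Lean document; each statement's English description precedes it below -/
import Mathlib

section
/- If F and G are regular families (hereditary, spreading, compact subsets of finite subsets of ℕ), then the family F[G] = {∪_{i=1}^k G_i : G_i ∈ G, (min G_i)_{i=1}^k ∈ F, G_1 < G_2 < ... < G_k} is regular. -/
open Filter Topology

namespace LT2003

/-- `A < B` for finite subsets of ℕ. -/
def FinsetLT (A B : Finset ℕ) : Prop := ∀ a ∈ A, ∀ b ∈ B, a < b

/-- A family of finite sets is hereditary if it is closed under subsets. -/
def IsHereditary (F : Set (Finset ℕ)) : Prop := ∀ A ∈ F, ∀ B, B ⊆ A → B ∈ F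

/-- `G` is a spreading of `A`. -/
def IsSpreadOf (G A : Finset ℕ) : Prop :=
  ∃ f : ℕ → ℕ, StrictMonoOn f ↑A ∧ (∀ a ∈ A, a ≤ f a) ∧ G = A.image f

def IsSpreading (F : Set (Finset ℕ)) : Prop := ∀ A ∈ F, ∀ G, IsSpreadOf G A → G ∈ F

/-- Embed a finite set into Cantor space `ℕ → Bool`. -/
def famEmbed (A : Finset ℕ) : ℕ → Bool := fun n => decide (n ∈ A)

/-- Compactness of a family, as a subset of `2^ℕ`. -/
def IsCompactFam (F : Set (Finset ℕ)) : Prop := IsCompact (famEmbed '' F)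

def IsRegular (F : Set (Finset ℕ)) : Prop := IsHereditary F ∧ IsSpreading F ∧ IsCompactFam F

/-- The family of sets of cardinality at most `j`. -/
def Ak (j : ℕ) : Set (Finset ℕ) := {A | A.card ≤ j}

/-- `(E i)` is an `F`-admissible sequence: nonempty, successively ordered sets whose minima form
a member of `F`. -/
def admissibleSeq (F : Set (Finset ℕ)) {k : ℕ} (E : Fin k → Finset ℕ) : Prop :=
  ∃ h : ∀ i, (E i).Nonempty,
    (∀ i j : Fin k, i < j → FinsetLT (E i) (E j)) ∧
    (Finset.univ.image fun i => (E i).min' (h i)) ∈ F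

/-- `F[G]`: unions of `F`-admissible sequences of members of `G`. -/
def comb (F G : Set (Finset ℕ)) : Set (Finset ℕ) :=
  {A | ∃ (k : ℕ) (E : Fin k → Finset ℕ),
    admissibleSeq F E ∧ (∀ i, E i ∈ G) ∧ A = Finset.univ.sup E}

/-- `(F, G) = {B ∪ C : B < C, B ∈ F, C ∈ G}`. -/
def pairFam (F G : Set (Finset ℕ)) : Set (Finset ℕ) :=
  {A | ∃ B ∈ F, ∃ C ∈ G, FinsetLT B C ∧ A = B ∪ C}

/-- `F ⊖ G`. -/
def ominus (F G : Set (Finset ℕ)) : Set (Finset ℕ) :=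
  {A | ∃ B ∈ G, (∀ C ∈ G, B ⊆ C → B = C) ∧ FinsetLT B A ∧ B ∪ A ∈ F}

/-- Members of `F` that are limit points of `F` in Cantor space. -/
def derivFam (F : Set (Finset ℕ)) : Set (Finset ℕ) :=
  {A | A ∈ F ∧ AccPt (famEmbed A) (𝓟 (famEmbed '' F))}

/-- Iterated Cantor–Bendixson derivative of a family. -/
noncomputable def CBd (F : Set (Finset ℕ)) : Ordinal → Set (Finset ℕ) :=
  WellFounded.fix wellFounded_lt fun o ih =>
    F ∩ ⋂ p : Set.Iio o, derivFam (ih p.1 p.2)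

/-- The Cantor–Bendixson index `ι(F)`. -/
noncomputable def CBindex (F : Set (Finset ℕ)) : Ordinal :=
  sInf {o | CBd F (o + 1) = ∅}

/-- The first Schreier family `S_1 = {A : |A| ≤ min A}`. -/
def schreierOne : Set (Finset ℕ) := {A | ∀ m ∈ A, A.card ≤ m}

/-- A transfinite system of Schreier families with some choice of fundamental sequences. -/
def IsSchreierSystem (S : Ordinal → Set (Finset ℕ)) : Prop :=
  (S 0 = {A | A.card ≤ 1}) ∧
  (S 1 = schreierOne) ∧
  (∀ o, S (o + 1) = comb schreierOne (S o)) ∧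
  (∀ o, Order.IsSuccLimit o → ∃ f : ℕ → Ordinal, StrictMono f ∧ (∀ n, f n < o) ∧
    (⨆ n, f n) = o ∧ S o = {A | A = ∅ ∨ ∃ n : ℕ, (∀ m ∈ A, n ≤ m) ∧ A ∈ S (f n)})

/-- The sup (`c₀`) norm on finitely supported sequences. -/
noncomputable def supNorm (x : ℕ →₀ ℝ) : ℝ := ⨆ k, |x k|

/-- Restriction of a finitely supported sequence to a finite coordinate set. -/
noncomputable def restrF (E : Finset ℕ) (x : ℕ →₀ ℝ) : ℕ →₀ ℝ := x.filter (· ∈ E)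

/-- The auxiliary norms `‖·‖_m` of the mixed Tsirelson space `T[(θ_n, F_n)]`. -/
noncomputable def mixedNorm (t : ℕ → ℝ) (F : ℕ → Set (Finset ℕ)) : ℕ → (ℕ →₀ ℝ) → ℝ
  | 0, x => supNorm x
  | m + 1, x =>
    max (mixedNorm t F m x)
      (sSup {c | ∃ (n k : ℕ) (E : Fin k → Finset ℕ), admissibleSeq (F n) E ∧
        c = t n * ∑ i, mixedNorm t F m (restrF (E i) x)})

/-- The mixed Tsirelson norm `‖x‖ = lim_m ‖x‖_m = sup_m ‖x‖_m` on `c₀₀`. -/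
noncomputable def tsNorm (t : ℕ → ℝ) (F : ℕ → Set (Finset ℕ)) (x : ℕ →₀ ℝ) : ℝ :=
  ⨆ m, mixedNorm t F m x

/-- The derived tree of a tree of (nonempty) finite sequences. -/
def treeDeriv {B : Type*} (T : Set (List B)) : Set (List B) :=
  {l | l ≠ [] ∧ ∃ x, l ++ [x] ∈ T}

noncomputable def treeDerivIter {B : Type*} (T : Set (List B)) : Ordinal → Set (List B) :=
  WellFounded.fix wellFounded_lt fun o ih =>
    T ∩ ⋂ p : Set.Iio o, treeDeriv (ih p.1 p.2)

/-- The order `o(T)` of a (well-founded) tree. -/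
noncomputable def treeOrder {B : Type*} (T : Set (List B)) : Ordinal :=
  sInf {o | treeDerivIter T o = ∅}

def IsTree {B : Type*} (T : Set (List B)) : Prop :=
  ∀ (l : List B) (x : B), l ++ [x] ∈ T → l = [] ∨ l ∈ T

def IsWellFoundedTree {B : Type*} (T : Set (List B)) : Prop :=
  ¬∃ x : ℕ → B, ∀ m : ℕ, (List.ofFn fun i : Fin (m + 1) => x i) ∈ T

variable {B : Type*}

/-- Support of a vector with respect to a basis. -/
noncomputable def bsupp [AddCommGroup B] [Module ℝ B] (b : Module.Basis ℕ ℝ B) (x : B) : Finset ℕ :=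
  (b.repr x).support

def IsBlockList [NormedAddCommGroup B] [NormedSpace ℝ B] (b : Module.Basis ℕ ℝ B) (l : List B) : Prop :=
  ∀ i j : Fin l.length, i < j → FinsetLT (bsupp b (l.get i)) (bsupp b (l.get j))

def IsL1KList [NormedAddCommGroup B] [NormedSpace ℝ B] (K : ℝ) (l : List B) : Prop :=
  (∀ i : Fin l.length, ‖l.get i‖ = 1) ∧
  ∀ a : Fin l.length → ℝ, K⁻¹ * ∑ i, |a i| ≤ ‖∑ i, a i • l.get i‖

def IsL1BlockTree [NormedAddCommGroup B] [NormedSpace ℝ B] (b : Module.Basis ℕ ℝ B) (K : ℝ)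
    (T : Set (List B)) : Prop :=
  IsTree T ∧ ∀ l ∈ T, l ≠ [] ∧ IsBlockList b l ∧ IsL1KList K l

def IsBlockSeq [NormedAddCommGroup B] [NormedSpace ℝ B] (b : Module.Basis ℕ ℝ B) (y : ℕ → B) : Prop :=
  (∀ k, y k ≠ 0) ∧ ∀ k, FinsetLT (bsupp b (y k)) (bsupp b (y (k + 1)))

def IsBlockSubspace [NormedAddCommGroup B] [NormedSpace ℝ B] (b : Module.Basis ℕ ℝ B) (Y : Set B) :
    Prop :=
  ∃ y : ℕ → B, IsBlockSeq b y ∧ Y = closure (Submodule.span ℝ (Set.range y) : Set B)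

/-- `I_b(Y, K)`: sup of orders of ℓ¹-K-block trees with nodes in `Y`. -/
noncomputable def blockIndexK [NormedAddCommGroup B] [NormedSpace ℝ B] (b : Module.Basis ℕ ℝ B)
    (Y : Set B) (K : ℝ) : Ordinal :=
  sSup {o | ∃ T : Set (List B), IsL1BlockTree b K T ∧ IsWellFoundedTree T ∧
    (∀ l ∈ T, ∀ x ∈ l, x ∈ Y) ∧ o = treeOrder T}

/-- `I_b(Y) = sup_{K} I_b(Y, K)`. -/
noncomputable def blockIndex [NormedAddCommGroup B] [NormedSpace ℝ B] (b : Module.Basis ℕ ℝ B)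
    (Y : Set B) : Ordinal :=
  sSup {o | ∃ K : ℝ, 1 < K ∧ o = blockIndexK b Y K}

/-- An (unordered) collection of sets is `F`-admissible. -/
def setAdmissible (F : Set (Finset ℕ)) (S : Set (Finset ℕ)) : Prop :=
  ∃ (k : ℕ) (E : Fin k → Finset ℕ), admissibleSeq F E ∧ S = Set.range E

/-- `[F_r, ..., F_1] = F_r[F_{r-1},...,F_1]`. -/
def iterComb : List (Set (Finset ℕ)) → Set (Finset ℕ)
  | [] => ∅
  | [F] => F
  | F :: rest => comb F (iterComb rest)

/-- `G_i = ∪ {[F_{m_r},...,F_{m_1}] : m_1 + ... + m_r ≤ N}`. -/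
def Gfam (F : ℕ → Set (Finset ℕ)) (N : ℕ) : Set (Finset ℕ) :=
  ⋃ (l : List ℕ) (_ : l ≠ []) (_ : ∀ x ∈ l, 1 ≤ x) (_ : l.sum ≤ N), iterComb (l.map F)

lemma spread_helper {F : Set (Finset ℕ)} (hsp : IsSpreading F) {p : ℕ} (a b : Fin p → ℕ)
    (ha : StrictMono a) (hb : StrictMono b) (hab : ∀ i, a i ≤ b i)
    (hA : Finset.univ.image a ∈ F) : Finset.univ.image b ∈ F := by
  classical
  refine hsp _ hA _ ?_
  set f : ℕ → ℕ := fun m => if h : ∃ i, a i = m then b h.choose else m with hf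
  have key : ∀ i, f (a i) = b i := by
    intro i
    have h : ∃ i', a i' = a i := ⟨i, rfl⟩
    simp only [hf, dif_pos h]
    congr 1
    exact ha.injective h.choose_spec
  refine ⟨f, ?_, ?_, ?_⟩
  · intro x hx y hy hxy
    simp only [Finset.coe_image, Set.mem_image] at hx hy
    obtain ⟨i, -, rfl⟩ := hx
    obtain ⟨j, -, rfl⟩ := hy
    rw [key i, key j]
    exact hb (ha.lt_iff_lt.mp hxy)
  · intro x hx
    simp only [Finset.mem_image] at hx
    obtain ⟨i, -, rfl⟩ := hx
    rw [key i]; exact hab i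
  · rw [Finset.image_image]
    apply Finset.image_congr
    intro i _
    exact (key i).symm

lemma not_infinite {H : Set (Finset ℕ)} (hcomp : IsCompactFam H)
    (S : Set ℕ) (hinf : S.Infinite) (hall : ∀ t : Finset ℕ, ↑t ⊆ S → t ∈ H) : False := by
  classical
  set u : ℕ → ℕ := Nat.nth (· ∈ S) with hu
  have hmono : StrictMono u := Nat.nth_strictMono hinf
  have humem : ∀ i, u i ∈ S := fun i => Nat.nth_mem_of_infinite hinf i
  set A : ℕ → Finset ℕ := fun r => (Finset.range r).image u with hA
  have hAH : ∀ r, A r ∈ H := by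
    intro r
    apply hall
    intro m hm
    simp only [hA, Finset.coe_image, Set.mem_image] at hm
    obtain ⟨i, -, rfl⟩ := hm
    exact humem i
  set x : ℕ → Bool := fun n => decide (n ∈ Set.range u) with hx
  have hxc : x ∈ closure (famEmbed '' H) := by
    have ht : Tendsto (fun r => famEmbed (A r)) atTop (nhds x) := by
      rw [tendsto_pi_nhds]
      intro n
      rw [nhds_discrete, tendsto_pure]
      filter_upwards [eventually_ge_atTop (n + 1)] with r hr
      have hnu : n < u r := lt_of_lt_of_le (Nat.lt_succ_self n) (le_trans hr (hmono.le_apply))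
      show decide (n ∈ A r) = decide (n ∈ Set.range u)
      apply decide_eq_decide.mpr
      constructor
      · rintro hm
        simp only [hA, Finset.mem_image] at hm
        obtain ⟨i, -, rfl⟩ := hm
        exact ⟨i, rfl⟩
      · rintro ⟨i, rfl⟩
        have : i < r := hmono.lt_iff_lt.mp hnu
        simp only [hA, Finset.mem_image]
        exact ⟨i, Finset.mem_range.mpr this, rfl⟩
    exact mem_closure_of_tendsto ht
      (Eventually.of_forall fun r => Set.mem_image_of_mem _ (hAH r))
  have hcl : IsClosed (famEmbed '' H) := hcomp.isClosed
  rw [hcl.closure_eq] at hxc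
  obtain ⟨A0, -, hfa⟩ := hxc
  set i0 : ℕ := A0.sup id + 1 with hi0
  have h1 : famEmbed A0 (u i0) = false := by
    simp only [famEmbed, decide_eq_false_iff_not]
    intro hmem
    have : u i0 ≤ A0.sup id := Finset.le_sup (f := id) hmem
    have : i0 ≤ A0.sup id := le_trans hmono.le_apply this
    omega
  have h2 : x (u i0) = true := by
    simp only [hx, decide_eq_true_eq]
    exact ⟨i0, rfl⟩
  rw [hfa] at h1
  rw [h1] at h2
  exact Bool.false_ne_true h2



lemma minlt {k : ℕ} {E : Fin k → Finset ℕ} (hne : ∀ i, (E i).Nonempty)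
    (hord : ∀ i j : Fin k, i < j → FinsetLT (E i) (E j)) {i j : Fin k} (hij : i < j)
    {m : ℕ} (hm : m ∈ E j) : (E i).min' (hne i) < m :=
  hord i j hij _ ((E i).min'_mem (hne i)) m hm

lemma comb_hereditary {F G : Set (Finset ℕ)} (hFh : IsHereditary F) (hFs : IsSpreading F)
    (hGh : IsHereditary G) : IsHereditary (comb F G) := by
  classical
  rintro A ⟨k, E, ⟨hne, hord, hminF⟩, hEG, hA⟩ B hB
  set s : Finset (Fin k) := Finset.univ.filter (fun i => (E i ∩ B).Nonempty) with hs
  set e := s.orderIsoOfFin rfl with he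
  set E' : Fin s.card → Finset ℕ := fun j => E (e j) ∩ B with hE'
  have hsmem : ∀ i ∈ s, (E i ∩ B).Nonempty := by
    intro i hi
    rw [hs, Finset.mem_filter] at hi
    exact hi.2
  have hne' : ∀ j, (E' j).Nonempty := fun j => hsmem _ (e j).2
  have hord' : ∀ i j : Fin s.card, i < j → FinsetLT (E' i) (E' j) := by
    intro i j hij m hm m' hm'
    have hee : (e i : Fin k) < e j := by
      exact_mod_cast (e.lt_iff_lt.mpr hij)
    exact hord _ _ hee m (Finset.mem_of_mem_inter_left hm) m'
      (Finset.mem_of_mem_inter_left hm')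
  have hmin' : (Finset.univ.image fun j => (E' j).min' (hne' j)) ∈ F := by
    apply spread_helper hFs (fun j : Fin s.card => (E (e j)).min' (hne (e j)))
    · intro i j hij
      have hee : (e i : Fin k) < e j := by exact_mod_cast (e.lt_iff_lt.mpr hij)
      exact minlt hne hord hee ((E (e j)).min'_mem _)
    · intro i j hij
      have hee : (e i : Fin k) < e j := by exact_mod_cast (e.lt_iff_lt.mpr hij)
      exact hord _ _ hee _ (Finset.mem_of_mem_inter_left ((E' i).min'_mem (hne' i))) _
        (Finset.mem_of_mem_inter_left ((E' j).min'_mem (hne' j)))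
    · intro j
      exact Finset.min'_le _ _ (Finset.mem_of_mem_inter_left ((E' j).min'_mem (hne' j)))
    · refine hFh _ hminF _ ?_
      intro m hm
      simp only [Finset.mem_image, Finset.mem_univ, true_and] at hm ⊢
      obtain ⟨j, rfl⟩ := hm
      exact ⟨e j, rfl⟩
  refine ⟨s.card, E', ⟨hne', hord', hmin'⟩, ?_, ?_⟩
  · intro j
    exact hGh _ (hEG (e j)) _ Finset.inter_subset_left
  · ext m
    simp only [Finset.mem_sup, Finset.mem_univ, true_and]
    constructor
    · intro hm
      have hmA : m ∈ A := hB hm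
      rw [hA] at hmA
      rw [Finset.mem_sup] at hmA
      obtain ⟨i, -, hi⟩ := hmA
      have his : i ∈ s := by
        rw [hs, Finset.mem_filter]
        exact ⟨Finset.mem_univ i, ⟨m, Finset.mem_inter.mpr ⟨hi, hm⟩⟩⟩
      refine ⟨e.symm ⟨i, his⟩, ?_⟩
      have hcoe : ((e (e.symm ⟨i, his⟩) : { x // x ∈ s }) : Fin k) = i := by
        rw [e.apply_symm_apply]
      show m ∈ E ((e (e.symm ⟨i, his⟩) : { x // x ∈ s }) : Fin k) ∩ B
      rw [hcoe]
      exact Finset.mem_inter.mpr ⟨hi, hm⟩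
    · rintro ⟨j, hj⟩
      exact Finset.mem_of_mem_inter_right hj

lemma comb_spreading {F G : Set (Finset ℕ)} (hFs : IsSpreading F) (hGs : IsSpreading G) :
    IsSpreading (comb F G) := by
  classical
  rintro A ⟨k, E, ⟨hne, hord, hminF⟩, hEG, hA⟩ A' ⟨f, hf, hfa, hA'⟩
  have hEA : ∀ i, E i ⊆ A := by
    intro i
    rw [hA]
    exact Finset.le_sup (f := E) (Finset.mem_univ i)
  set E' : Fin k → Finset ℕ := fun i => (E i).image f with hE'
  have hne' : ∀ i, (E' i).Nonempty := fun i => (hne i).image f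
  have hord' : ∀ i j : Fin k, i < j → FinsetLT (E' i) (E' j) := by
    intro i j hij m hm m' hm'
    simp only [hE', Finset.mem_image] at hm hm'
    obtain ⟨a, ha, rfl⟩ := hm
    obtain ⟨a', ha', rfl⟩ := hm'
    exact hf (hEA i ha) (hEA j ha') (hord i j hij a ha a' ha')
  have hminval : ∀ i, (E' i).min' (hne' i) = f ((E i).min' (hne i)) := by
    intro i
    apply le_antisymm
    · exact Finset.min'_le _ _ (Finset.mem_image_of_mem f ((E i).min'_mem (hne i)))
    · apply Finset.le_min'
      intro y hy
      simp only [hE', Finset.mem_image] at hy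
      obtain ⟨a, ha, rfl⟩ := hy
      exact hf.monotoneOn (hEA i ((E i).min'_mem (hne i))) (hEA i ha)
        (Finset.min'_le _ _ ha)
  have hmin' : (Finset.univ.image fun i => (E' i).min' (hne' i)) ∈ F := by
    apply hFs _ hminF
    refine ⟨f, ?_, ?_, ?_⟩
    · apply hf.mono
      intro m hm
      simp only [Finset.coe_image, Set.mem_image] at hm
      obtain ⟨i, -, rfl⟩ := hm
      exact hEA i ((E i).min'_mem (hne i))
    · intro a ha
      simp only [Finset.mem_image, Finset.mem_univ, true_and] at ha
      obtain ⟨i, rfl⟩ := ha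
      exact hfa _ (hEA i ((E i).min'_mem (hne i)))
    · rw [Finset.image_image]
      apply Finset.image_congr
      intro i _
      exact hminval i
  refine ⟨k, E', ⟨hne', hord', hmin'⟩, ?_, ?_⟩
  · intro i
    refine hGs _ (hEG i) _ ⟨f, hf.mono ?_, fun a ha => hfa a (hEA i ha), rfl⟩
    exact fun m hm => hEA i hm
  · rw [hA', hA]
    ext m
    simp only [Finset.mem_image, Finset.mem_sup, Finset.mem_univ, true_and, hE']
    constructor
    · rintro ⟨a, ⟨i, hi⟩, rfl⟩
      exact ⟨i, a, hi, rfl⟩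
    · rintro ⟨i, a, hi, rfl⟩
      exact ⟨a, ⟨i, hi⟩, rfl⟩



open scoped Classical in
noncomputable def seg (S : Set ℕ) (a b : ℕ) : Finset ℕ := (Finset.Icc a b).filter (· ∈ S)

lemma mem_seg {S : Set ℕ} {a b m : ℕ} : m ∈ seg S a b ↔ (a ≤ m ∧ m ≤ b) ∧ m ∈ S := by
  classical
  rw [seg, Finset.mem_filter, Finset.mem_Icc]

lemma greedy {F G : Set (Finset ℕ)} (hFh : IsHereditary F) (hFs : IsSpreading F)
    (hFc : IsCompactFam F) (hGh : IsHereditary G) (hGc : IsCompactFam G)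
    (S : Set ℕ) (hS : S.Infinite) (htr : ∀ t : Finset ℕ, ↑t ⊆ S → t ∈ comb F G) : False := by
  classical
  obtain ⟨a0, ha0⟩ := hS.nonempty
  have hsingle : ∀ a, a ∈ S → ({a} : Finset ℕ) ∈ G := by
    intro a ha
    have h1 : ({a} : Finset ℕ) ∈ comb F G := htr {a} (by simpa using ha)
    obtain ⟨k, E, ⟨hne, -, -⟩, hEG, hA⟩ := h1
    have : a ∈ Finset.univ.sup E := by rw [← hA]; exact Finset.mem_singleton_self a
    rw [Finset.mem_sup] at this
    obtain ⟨i, -, hi⟩ := this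
    exact hGh _ (hEG i) _ (Finset.singleton_subset_iff.mpr hi)
  have hGempty : (∅ : Finset ℕ) ∈ G := hGh _ (hsingle a0 ha0) _ (Finset.empty_subset _)
  have hno : ∀ a : ℕ, {b | seg S a b ∉ G}.Nonempty := by
    intro a
    by_contra hcon
    rw [Set.not_nonempty_iff_eq_empty] at hcon
    have hallG : ∀ b, seg S a b ∈ G := by
      intro b
      by_contra hb
      have : b ∈ {b | seg S a b ∉ G} := hb
      rw [hcon] at this
      exact this
    refine not_infinite hGc (S \ Set.Iio a) (hS.diff (Set.finite_Iio a)) ?_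
    intro t ht
    refine hGh _ (hallG (t.sup id)) _ ?_
    intro m hm
    rw [mem_seg]
    have h2 := ht (Finset.mem_coe.mpr hm)
    exact ⟨⟨not_lt.mp h2.2, Finset.le_sup (f := id) hm⟩, h2.1⟩
  set c : ℕ → ℕ := fun a => sInf {b | seg S a b ∉ G} with hcdef
  have hc1 : ∀ a, seg S a (c a) ∉ G := fun a => Nat.sInf_mem (hno a)
  have hc2 : ∀ a b, b < c a → seg S a b ∈ G := by
    intro a b hb
    by_contra h
    exact absurd (Nat.sInf_le h) (not_le.mpr hb)
  have hlt : ∀ a, a ∈ S → a < c a := by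
    intro a ha
    by_contra h
    push_neg at h
    rcases eq_or_lt_of_le h with heq | hlt'
    · apply hc1 a
      rw [heq]
      have hsa : seg S a a = {a} := by
        ext m
        rw [mem_seg, Finset.mem_singleton]
        constructor
        · rintro ⟨⟨h1, h2⟩, -⟩; omega
        · rintro rfl; exact ⟨⟨le_refl _, le_refl _⟩, ha⟩
      rw [hsa]
      exact hsingle a ha
    · apply hc1 a
      have : seg S a (c a) = ∅ := by
        rw [seg, Finset.Icc_eq_empty (by omega), Finset.filter_empty]
      rw [this]
      exact hGempty
  have hcS : ∀ a, a ∈ S → c a ∈ S := by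
    intro a ha
    by_contra h
    apply hc1 a
    have hpos : a < c a := hlt a ha
    have heq : seg S a (c a) = seg S a (c a - 1) := by
      ext m
      rw [mem_seg, mem_seg]
      constructor
      · rintro ⟨⟨h1, h2⟩, h3⟩
        have : m ≠ c a := fun hm => h (hm ▸ h3)
        exact ⟨⟨h1, by omega⟩, h3⟩
      · rintro ⟨⟨h1, h2⟩, h3⟩
        exact ⟨⟨h1, by omega⟩, h3⟩
    rw [heq]
    exact hc2 a _ (by omega)
  set start : ℕ → ℕ := fun j => Nat.rec (sInf S) (fun _ ih => c ih) j with hstartdef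
  have hstartsucc : ∀ j, start (j + 1) = c (start j) := fun j => rfl
  have hstartS : ∀ j, start j ∈ S := by
    intro j
    induction j with
    | zero => exact Nat.sInf_mem hS.nonempty
    | succ j ih => rw [hstartsucc]; exact hcS _ ih
  have hsm : StrictMono start :=
    strictMono_nat_of_lt_succ fun j => by rw [hstartsucc]; exact hlt _ (hstartS j)
  have key : ∀ r : ℕ, (Finset.univ.image fun j : Fin (r + 1) => start (j : ℕ)) ∈ F := by
    intro r
    have hTsub : ↑(seg S 0 (start (r + 1))) ⊆ S := by
      intro m hm
      rw [Finset.mem_coe, mem_seg] at hm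
      exact hm.2
    obtain ⟨k, E, ⟨hne, hord, hminF⟩, hEG, hT⟩ := htr _ hTsub
    have hmemT : ∀ m, m ∈ S → m ≤ start (r + 1) → ∃ i : Fin k, m ∈ E i := by
      intro m hmS hmle
      have : m ∈ Finset.univ.sup E := by
        rw [← hT, mem_seg]
        exact ⟨⟨Nat.zero_le m, hmle⟩, hmS⟩
      rw [Finset.mem_sup] at this
      obtain ⟨i, -, hi⟩ := this
      exact ⟨i, hi⟩
    have claim : ∀ j, j ≤ r → ∃ hj : j < k, (E ⟨j, hj⟩).min' (hne _) ≤ start j := by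
      intro j
      induction j with
      | zero =>
        intro _
        obtain ⟨i, hi⟩ := hmemT (start 0) (hstartS 0) (hsm.monotone (Nat.zero_le (r + 1)))
        have hk : 0 < k := i.pos
        refine ⟨hk, ?_⟩
        rcases eq_or_lt_of_le (show (⟨0, hk⟩ : Fin k) ≤ i from by
            rw [Fin.le_def]; exact Nat.zero_le _) with heq | hlt'
        · exact Finset.min'_le _ _ (heq ▸ hi)
        · exact le_of_lt (minlt hne hord hlt' hi)
      | succ j ihj =>
        intro hjr
        obtain ⟨hj, hmin⟩ := ihj (Nat.le_of_succ_le hjr)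
        have hs'S : start (j + 1) ∈ S := hstartS (j + 1)
        have hs'le : start (j + 1) ≤ start (r + 1) := hsm.monotone (show j + 1 ≤ r + 1 by omega)
        obtain ⟨i, hi⟩ := hmemT _ hs'S hs'le
        have hij : (⟨j, hj⟩ : Fin k) < i := by
          by_contra hcon
          push_neg at hcon
          apply hc1 (start j)
          refine hGh _ (hEG ⟨j, hj⟩) _ ?_
          intro m hm
          rw [mem_seg] at hm
          obtain ⟨⟨hm1, hm2⟩, hm3⟩ := hm
          have hm2' : m ≤ start (j + 1) := by rw [hstartsucc]; exact hm2
          obtain ⟨l, hl⟩ := hmemT m hm3 (le_trans hm2' hs'le)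
          have hli : l ≤ i := by
            by_contra hcon2
            push_neg at hcon2
            have h4 : start (j + 1) < m := hord i l hcon2 (start (j + 1)) hi m hl
            omega
          have hjl : (⟨j, hj⟩ : Fin k) ≤ l := by
            by_contra hcon2
            push_neg at hcon2
            have h5 : m < (E ⟨j, hj⟩).min' (hne ⟨j, hj⟩) :=
              hord l ⟨j, hj⟩ hcon2 m hl _ ((E ⟨j, hj⟩).min'_mem (hne ⟨j, hj⟩))
            omega
          have hlj : l = ⟨j, hj⟩ := le_antisymm (le_trans hli hcon) hjl
          rw [← hlj]
          exact hl
        have hival := Fin.lt_def.mp hij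
        have hik := i.isLt
        have hj1 : j + 1 < k := by simp only [Fin.val_mk] at hival; omega
        refine ⟨hj1, ?_⟩
        rcases eq_or_lt_of_le (show (⟨j + 1, hj1⟩ : Fin k) ≤ i from by
            rw [Fin.le_def]; simp only [Fin.val_mk] at hival ⊢; omega) with heq | hlt'
        · exact Finset.min'_le _ _ (heq ▸ hi)
        · exact le_of_lt (minlt hne hord hlt' hi)
    obtain ⟨hrk, -⟩ := claim r le_rfl
    have hr1 : r + 1 ≤ k := hrk
    apply spread_helper hFs (fun j : Fin (r + 1) => (E (Fin.castLE hr1 j)).min' (hne _))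
    · intro i j hij
      refine minlt hne hord ?_ ((E (Fin.castLE hr1 j)).min'_mem _)
      simp only [Fin.lt_def, Fin.coe_castLE]
      exact Fin.lt_def.mp hij
    · intro i j hij
      exact hsm (Fin.lt_def.mp hij)
    · intro j
      obtain ⟨hj, hle⟩ := claim j.1 (Nat.lt_succ_iff.mp j.2)
      have hcast : Fin.castLE hr1 j = ⟨j.1, hj⟩ := Fin.ext rfl
      rw [hcast]
      exact hle
    · refine hFh _ hminF _ ?_
      intro m hm
      simp only [Finset.mem_image, Finset.mem_univ, true_and] at hm ⊢
      obtain ⟨j, rfl⟩ := hm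
      exact ⟨Fin.castLE hr1 j, rfl⟩
  refine not_infinite hFc (Set.range start) (Set.infinite_range_of_injective hsm.injective) ?_
  intro t ht
  refine hFh _ (key (t.sup id)) _ ?_
  intro m hm
  obtain ⟨j, rfl⟩ := ht (Finset.mem_coe.mpr hm)
  simp only [Finset.mem_image, Finset.mem_univ, true_and]
  have hjle : j ≤ start j := hsm.le_apply
  have hsup : start j ≤ t.sup id := Finset.le_sup (f := id) hm
  exact ⟨⟨j, by omega⟩, rfl⟩



lemma comb_compact {F G : Set (Finset ℕ)} (hF : IsRegular F) (hG : IsRegular G) :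
    IsCompactFam (comb F G) := by
  classical
  obtain ⟨hFh, hFs, hFc⟩ := hF
  obtain ⟨hGh, hGs, hGc⟩ := hG
  have hher := comb_hereditary hFh hFs hGh
  have hclosed : IsClosed (famEmbed '' comb F G) := by
    apply isClosed_of_closure_subset
    intro x hx
    set S : Set ℕ := {n | x n = true} with hSdef
    have htrunc : ∀ t : Finset ℕ, ↑t ⊆ S → t ∈ comb F G := by
      intro t ht
      set n := t.sup id + 1 with hn
      have hUeq : {y : ℕ → Bool | ∀ m ∈ Finset.range n, y m = x m} =
          ⋂ m ∈ Finset.range n, {y : ℕ → Bool | y m = x m} := by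
        ext y; simp
      have hU : IsOpen {y : ℕ → Bool | ∀ m ∈ Finset.range n, y m = x m} := by
        rw [hUeq]
        apply isOpen_biInter_finset
        intro m _
        have hcont : Continuous fun y : ℕ → Bool => y m := continuous_apply m
        exact hcont.isOpen_preimage _ (isOpen_discrete {x m})
      have hxU : x ∈ {y : ℕ → Bool | ∀ m ∈ Finset.range n, y m = x m} := fun m _ => rfl
      obtain ⟨y, hyU, hyim⟩ := mem_closure_iff.mp hx _ hU hxU
      obtain ⟨A, hA, hyA⟩ := hyim
      refine hher _ hA _ ?_
      intro m hm
      have hmn : m ∈ Finset.range n := by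
        rw [Finset.mem_range, hn]
        have hle : m ≤ t.sup id := Finset.le_sup (f := id) hm
        omega
      have h2 : x m = true := ht (Finset.mem_coe.mpr hm)
      have h1 : famEmbed A m = true := by
        rw [hyA]
        rw [hyU m hmn]
        exact h2
      exact of_decide_eq_true h1
    have hSfin : S.Finite := by
      by_contra hinf
      exact greedy hFh hFs hFc hGh hGc S hinf htrunc
    have hTsub : ↑hSfin.toFinset ⊆ S := by rw [Set.Finite.coe_toFinset]
    refine ⟨hSfin.toFinset, htrunc _ hTsub, ?_⟩
    funext m
    show decide (m ∈ hSfin.toFinset) = x m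
    by_cases hm : x m = true
    · have hmem : m ∈ hSfin.toFinset := (Set.Finite.mem_toFinset hSfin).mpr hm
      simp [hmem, hm]
    · have hmf : x m = false := by revert hm; cases x m <;> simp
      have hnm : m ∉ hSfin.toFinset := fun hc => hm ((Set.Finite.mem_toFinset hSfin).mp hc)
      simp [hnm, hmf]
  exact hclosed.isCompact

/-- If `F` and `G` are regular families, then `F[G]` is regular. -/
theorem statement0 (F G : Set (Finset ℕ)) (hF : IsRegular F) (hG : IsRegular G) :
    IsRegular (comb F G) := by
  obtain ⟨hFh, hFs, hFc⟩ := hF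
  obtain ⟨hGh, hGs, hGc⟩ := hG
  exact ⟨comb_hereditary hFh hFs hGh, comb_spreading hFs hGs,
    comb_compact ⟨hFh, hFs, hFc⟩ ⟨hGh, hGs, hGc⟩⟩

end LT2003
end

section
/- If F and G are regular families, then the family (F, G) = {F' ∪ G' : F' < G', F' ∈ F, G' ∈ G} is regular. -/
open Filter Topology

namespace LT2003

variable {B : Type*}

/-- If `F` and `G` are regular families, then `(F, G)` is regular. -/
theorem statement1 (F G : Set (Finset ℕ)) (hF : IsRegular F) (hG : IsRegular G) :
    IsRegular (pairFam F G) := by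
  obtain ⟨hFh, hFs, hFc⟩ := hF
  obtain ⟨hGh, hGs, hGc⟩ := hG
  refine ⟨?_, ?_, ?_⟩
  · -- hereditary
    rintro A ⟨B, hB, C, hC, hlt, rfl⟩ D hD
    refine ⟨D ∩ B, hFh B hB _ Finset.inter_subset_right,
      D ∩ C, hGh C hC _ Finset.inter_subset_right, ?_, ?_⟩
    · intro a ha b hb
      exact hlt a (Finset.mem_of_mem_inter_right ha) b (Finset.mem_of_mem_inter_right hb)
    · rw [← Finset.inter_union_distrib_left, Finset.inter_eq_left.mpr hD]
  · -- spreading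
    rintro A ⟨B, hB, C, hC, hlt, rfl⟩ G' ⟨f, hmono, hle, rfl⟩
    refine ⟨B.image f, hFs B hB _ ⟨f, hmono.mono (by simp [Finset.coe_subset]),
        fun a ha => hle a (Finset.mem_union_left _ ha), rfl⟩,
      C.image f, hGs C hC _ ⟨f, hmono.mono (by simp [Finset.coe_subset]),
        fun a ha => hle a (Finset.mem_union_right _ ha), rfl⟩, ?_, ?_⟩
    · intro a ha b hb
      simp only [Finset.mem_image] at ha hb
      obtain ⟨a', ha', rfl⟩ := ha
      obtain ⟨b', hb', rfl⟩ := hb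
      exact hmono (by simp [ha']) (by simp [hb']) (hlt a' ha' b' hb')
    · exact (Finset.image_union ..)
  · -- compactness
    unfold IsCompactFam
    set S : Set ((ℕ → Bool) × (ℕ → Bool)) :=
      {p | ∀ b c : ℕ, c ≤ b → p.1 b = true → p.2 c = true → False} with hSdef
    have hclosed : IsClosed S := by
      have hrw : S = ⋂ b, ⋂ c, ⋂ (_ : c ≤ b),
          {p : (ℕ → Bool) × (ℕ → Bool) | p.1 b = true ∧ p.2 c = true}ᶜ := by
        ext p
        simp only [hSdef, Set.mem_setOf_eq, Set.mem_iInter, Set.mem_compl_iff, not_and]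
      rw [hrw]
      refine isClosed_iInter fun b => isClosed_iInter fun c => isClosed_iInter fun _ => ?_
      refine IsOpen.isClosed_compl ?_
      have h1 : Continuous fun p : (ℕ → Bool) × (ℕ → Bool) => p.1 b :=
        (continuous_apply b).comp continuous_fst
      have h2 : Continuous fun p : (ℕ → Bool) × (ℕ → Bool) => p.2 c :=
        (continuous_apply c).comp continuous_snd
      have : {p : (ℕ → Bool) × (ℕ → Bool) | p.1 b = true ∧ p.2 c = true} =
          ((fun p : (ℕ → Bool) × (ℕ → Bool) => p.1 b) ⁻¹' {true}) ∩
          ((fun p : (ℕ → Bool) × (ℕ → Bool) => p.2 c) ⁻¹' {true}) := by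
        ext p; simp [Set.mem_setOf_eq]
      rw [this]
      exact ((isOpen_discrete _).preimage h1).inter ((isOpen_discrete _).preimage h2)
    have hK : IsCompact (((famEmbed '' F) ×ˢ (famEmbed '' G)) ∩ S) :=
      (hFc.prod hGc).inter_right hclosed
    have hu : Continuous fun p : (ℕ → Bool) × (ℕ → Bool) => fun n => p.1 n || p.2 n := by
      refine continuous_pi fun n => ?_
      have : (fun p : (ℕ → Bool) × (ℕ → Bool) => p.1 n || p.2 n) =
          (fun q : Bool × Bool => q.1 || q.2) ∘ fun p => (p.1 n, p.2 n) := rfl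
      rw [this]
      exact continuous_of_discreteTopology.comp
        (((continuous_apply n).comp continuous_fst).prodMk
          ((continuous_apply n).comp continuous_snd))
    have himg : (fun p : (ℕ → Bool) × (ℕ → Bool) => fun n => p.1 n || p.2 n) ''
        (((famEmbed '' F) ×ˢ (famEmbed '' G)) ∩ S) = famEmbed '' pairFam F G := by
      ext z
      constructor
      · rintro ⟨⟨x, y⟩, ⟨⟨⟨B, hB, rfl⟩, ⟨C, hC, rfl⟩⟩, hS⟩, rfl⟩
        refine ⟨B ∪ C, ⟨B, hB, C, hC, ?_, rfl⟩, ?_⟩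
        · intro b hb c hc
          by_contra h
          exact hS b c (not_lt.mp h) (decide_eq_true hb) (decide_eq_true hc)
        · funext n
          simp [famEmbed, Finset.mem_union]
      · rintro ⟨A, ⟨B, hB, C, hC, hlt, rfl⟩, rfl⟩
        refine ⟨(famEmbed B, famEmbed C), ⟨⟨⟨B, hB, rfl⟩, ⟨C, hC, rfl⟩⟩, ?_⟩, ?_⟩
        · intro b c hcb hxb hyc
          exact absurd (hlt b (of_decide_eq_true hxb) c (of_decide_eq_true hyc))
            (not_lt.mpr hcb)
        · funext n
          simp [famEmbed, Finset.mem_union]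
    rw [← himg]
    exact hK.image hu

end LT2003
end

section
/- Let X = T[(θ_n, F_n)_{n=1}^∞] be a mixed Tsirelson space where each F_n satisfies: either F_n = A_j for some j or F_n[A_3] ⊆ (F_n)^2. Let (i_k) be a strictly increasing sequence in ℕ. Then for x = Σ a_k e_{i_{k+1}} and y = Σ a_k e_{i_k} and any m, there exist finite sets E_1 < E_2 < E_3 with ‖x‖_m ≤ Σ_{i=1}^3 ‖E_i y‖_m; consequently (e_{i_k}) and (e_{i_{k+1}}) are equivalent basic sequences. -/
open Filter Topology

namespace LT2003

variable {B : Type*}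

set_option linter.unusedSectionVars false
/-! ### Foundation lemmas -/

lemma finsetLT_empty_right (A : Finset ℕ) : FinsetLT A ∅ := by
  intro a _ b hb; exact absurd hb (Finset.notMem_empty b)

lemma finsetLT_empty_left (A : Finset ℕ) : FinsetLT ∅ A := by
  intro a ha; exact absurd ha (Finset.notMem_empty a)

lemma FinsetLT.mono {A B A' B' : Finset ℕ} (h : FinsetLT A B) (hA : A' ⊆ A) (hB : B' ⊆ B) :
    FinsetLT A' B' := fun a ha b hb => h a (hA ha) b (hB hb)

lemma finsetLT_disjoint {A B : Finset ℕ} (h : FinsetLT A B) : Disjoint A B := by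
  rw [Finset.disjoint_left]
  intro a ha hb
  exact lt_irrefl a (h a ha a hb)

/-- min with default value 0. -/
noncomputable def mino (S : Finset ℕ) : ℕ := if h : S.Nonempty then S.min' h else 0

lemma mino_mem {S : Finset ℕ} (h : S.Nonempty) : mino S ∈ S := by
  rw [mino, dif_pos h]; exact S.min'_mem h

lemma mino_le {S : Finset ℕ} {a : ℕ} (ha : a ∈ S) : mino S ≤ a := by
  rw [mino, dif_pos ⟨a, ha⟩]; exact S.min'_le a ha

lemma mino_eq_min' {S : Finset ℕ} (h : S.Nonempty) : mino S = S.min' h := by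
  rw [mino, dif_pos h]

lemma mino_lt_mino {A B : Finset ℕ} (h : FinsetLT A B) (hA : A.Nonempty) (hB : B.Nonempty) :
    mino A < mino B := h _ (mino_mem hA) _ (mino_mem hB)

lemma le_mino {S : Finset ℕ} {a : ℕ} (h : S.Nonempty) (ha : ∀ b ∈ S, a ≤ b) : a ≤ mino S :=
  ha _ (mino_mem h)

/-- Hereditary families are closed under Finset subsets. -/
lemma hered_mem {F : Set (Finset ℕ)} (hF : IsHereditary F) {A B : Finset ℕ}
    (hA : A ∈ F) (h : B ⊆ A) : B ∈ F := hF A hA B h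
/-- The spreading lemma: push a member of a regular family to the right. -/
lemma spread_mem {F : Set (Finset ℕ)} (hF : IsSpreading F) (s : Finset ℕ) (φ ψ : ℕ → ℕ)
    (hφ : StrictMonoOn φ ↑s) (hψ : StrictMonoOn ψ ↑s) (hle : ∀ l ∈ s, φ l ≤ ψ l)
    (hmem : s.image φ ∈ F) : s.image ψ ∈ F := by
  classical
  apply hF _ hmem
  set f : ℕ → ℕ := fun n => if h : ∃ l ∈ s, φ l = n then ψ h.choose else n with hf
  have key : ∀ l ∈ s, f (φ l) = ψ l := by
    intro l hl
    have hex : ∃ l' ∈ s, φ l' = φ l := ⟨l, hl, rfl⟩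
    have h1 := hex.choose_spec
    have e1 : hex.choose = l := hφ.injOn (by exact_mod_cast h1.1) hl h1.2
    simp only [hf, dif_pos hex]
    exact congrArg ψ e1
  refine ⟨f, ?_, ?_, ?_⟩
  · intro x hx y hy hxy
    simp only [Finset.coe_image, Set.mem_image, Finset.mem_coe] at hx hy
    obtain ⟨lx, hlx, rfl⟩ := hx
    obtain ⟨ly, hly, rfl⟩ := hy
    rw [key lx hlx, key ly hly]
    exact hψ hlx hly ((hφ.lt_iff_lt hlx hly).mp hxy)
  · intro n hn
    simp only [Finset.mem_image] at hn
    obtain ⟨l, hl, rfl⟩ := hn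
    rw [key l hl]; exact hle l hl
  · rw [Finset.image_image]
    apply Finset.image_congr
    intro l hl
    exact (key l hl).symm
/-! ### Finsupp restriction lemmas -/

lemma restrF_apply (E : Finset ℕ) (x : ℕ →₀ ℝ) (n : ℕ) :
    restrF E x n = if n ∈ E then x n else 0 := rfl

lemma restrF_empty (x : ℕ →₀ ℝ) : restrF ∅ x = 0 := by
  ext n; simp [restrF_apply]

lemma restrF_restrF (E H : Finset ℕ) (x : ℕ →₀ ℝ) :
    restrF E (restrF H x) = restrF (E ∩ H) x := by
  ext n; simp only [restrF_apply, Finset.mem_inter]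
  by_cases h1 : n ∈ E <;> by_cases h2 : n ∈ H <;> simp [h1, h2]

lemma restrF_eq_self {E : Finset ℕ} {x : ℕ →₀ ℝ} (h : x.support ⊆ E) : restrF E x = x := by
  ext n; rw [restrF_apply]
  by_cases hn : n ∈ E
  · rw [if_pos hn]
  · rw [if_neg hn]
    by_contra h0
    exact hn (h (Finsupp.mem_support_iff.mpr (fun hc => h0 hc.symm)))

lemma support_restrF (E : Finset ℕ) (x : ℕ →₀ ℝ) :
    (restrF E x).support = x.support.filter (· ∈ E) := rfl

lemma restrF_inter_support (E : Finset ℕ) (x : ℕ →₀ ℝ) :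
    restrF (E ∩ x.support) x = restrF E x := by
  ext n; simp only [restrF_apply, Finset.mem_inter]
  by_cases h1 : n ∈ E
  · by_cases h2 : n ∈ x.support
    · simp [h1, h2]
    · simp [h1, h2, Finsupp.notMem_support_iff.mp h2]
  · simp [h1]

lemma restrF_mapDomain {f : ℕ → ℕ} (hf : Function.Injective f) (E : Finset ℕ) (a : ℕ →₀ ℝ) :
    restrF E (Finsupp.mapDomain f a) = Finsupp.mapDomain f (a.filter (fun q => f q ∈ E)) := by
  ext n
  by_cases hn : n ∈ Set.range f
  · obtain ⟨q, rfl⟩ := hn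
    rw [restrF_apply, Finsupp.mapDomain_apply hf, Finsupp.mapDomain_apply hf,
      Finsupp.filter_apply]
  · simp [restrF_apply, Finsupp.mapDomain_notin_range _ _ hn]

/-- `mapDomain f (a.filter p)` is a restriction of `mapDomain f a`. -/
lemma mapDomain_filter_eq_restr {f : ℕ → ℕ} (hf : Function.Injective f)
    (p : ℕ → Prop) [DecidablePred p] (a : ℕ →₀ ℝ) :
    Finsupp.mapDomain f (a.filter p) =
      restrF ((a.filter p).support.image f) (Finsupp.mapDomain f a) := by
  rw [restrF_mapDomain hf]
  congr 1
  ext n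
  rw [Finsupp.filter_apply, Finsupp.filter_apply]
  by_cases h0 : a n = 0
  · simp only [h0, ite_self]
  · have : f n ∈ (a.filter p).support.image f ↔ p n := by
      simp only [Finset.mem_image, Finsupp.mem_support_iff]
      constructor
      · rintro ⟨q', hq', he⟩
        rw [Finsupp.filter_apply] at hq'
        rcases hf he with rfl
        by_contra hp
        exact hq' (if_neg hp)
      · intro hp
        exact ⟨n, by rw [Finsupp.filter_apply, if_pos hp]; exact h0, rfl⟩
    by_cases hp : p n
    · rw [if_pos hp, if_pos (this.mpr hp)]
    · rw [if_neg hp, if_neg (fun hc => hp (this.mp hc))]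
/-! ### The ℓ¹ bound and basic properties of the norms -/

/-- The ℓ¹ norm of a finitely supported sequence. -/
noncomputable def l1 (x : ℕ →₀ ℝ) : ℝ := ∑ k ∈ x.support, |x k|

lemma l1_nonneg (x : ℕ →₀ ℝ) : 0 ≤ l1 x := by
  apply Finset.sum_nonneg; intro k _; exact abs_nonneg _

lemma abs_le_l1 (x : ℕ →₀ ℝ) (k : ℕ) : |x k| ≤ l1 x := by
  by_cases hk : k ∈ x.support
  · exact Finset.single_le_sum (f := fun q => |x q|) (fun q _ => abs_nonneg (x q)) hk
  · rw [Finsupp.notMem_support_iff.mp hk, abs_zero]; exact l1_nonneg x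

lemma l1_zero : l1 0 = 0 := by simp [l1]

lemma bddAbove_abs (x : ℕ →₀ ℝ) : BddAbove (Set.range fun k => |x k|) :=
  ⟨l1 x, by rintro c ⟨k, rfl⟩; exact abs_le_l1 x k⟩

lemma abs_le_supNorm (x : ℕ →₀ ℝ) (k : ℕ) : |x k| ≤ supNorm x :=
  le_ciSup (bddAbove_abs x) k

lemma supNorm_le {x : ℕ →₀ ℝ} {c : ℝ} (h : ∀ k, |x k| ≤ c) : supNorm x ≤ c :=
  ciSup_le h

lemma supNorm_nonneg (x : ℕ →₀ ℝ) : 0 ≤ supNorm x :=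
  le_trans (abs_nonneg _) (abs_le_supNorm x 0)

lemma supNorm_le_l1 (x : ℕ →₀ ℝ) : supNorm x ≤ l1 x := supNorm_le (abs_le_l1 x)

lemma supNorm_mono {u x : ℕ →₀ ℝ} (h : ∀ k, |u k| ≤ |x k|) : supNorm u ≤ supNorm x :=
  supNorm_le fun k => le_trans (h k) (abs_le_supNorm x k)

lemma supNorm_mapDomain {f : ℕ → ℕ} (hf : Function.Injective f) (a : ℕ →₀ ℝ) :
    supNorm (Finsupp.mapDomain f a) = supNorm a := by
  apply le_antisymm
  · apply supNorm_le
    intro n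
    by_cases hn : n ∈ Set.range f
    · obtain ⟨q, rfl⟩ := hn
      rw [Finsupp.mapDomain_apply hf]; exact abs_le_supNorm a q
    · rw [Finsupp.mapDomain_notin_range _ _ hn, abs_zero]; exact supNorm_nonneg a
  · apply supNorm_le
    intro k
    rw [← Finsupp.mapDomain_apply hf a k]
    exact abs_le_supNorm _ (f k)

/-- The set whose sup is taken in the recursive definition of the norm. -/
def SSet (t : ℕ → ℝ) (F : ℕ → Set (Finset ℕ)) (m : ℕ) (x : ℕ →₀ ℝ) : Set ℝ :=
  {c | ∃ (n k : ℕ) (E : Fin k → Finset ℕ), admissibleSeq (F n) E ∧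
    c = t n * ∑ i, mixedNorm t F m (restrF (E i) x)}

lemma mixedNorm_succ (t : ℕ → ℝ) (F : ℕ → Set (Finset ℕ)) (m : ℕ) (x : ℕ →₀ ℝ) :
    mixedNorm t F (m + 1) x = max (mixedNorm t F m x) (sSup (SSet t F m x)) := rfl

section Norms

variable {t : ℕ → ℝ} {F : ℕ → Set (Finset ℕ)} (ht : ∀ n, 0 < t n ∧ t n < 1)
include ht

/-- sum of ℓ¹ norms of restrictions to successive sets is at most the ℓ¹ norm. -/
lemma sum_l1_restr_le {k : ℕ} (E : Fin k → Finset ℕ)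
    (horder : ∀ i j : Fin k, i < j → FinsetLT (E i) (E j)) (x : ℕ →₀ ℝ) :
    ∑ i, l1 (restrF (E i) x) ≤ l1 x := by
  have hdisj : (↑(Finset.univ : Finset (Fin k)) : Set (Fin k)).PairwiseDisjoint
      (fun i => x.support.filter (· ∈ E i)) := by
    intro i _ j _ hij
    have : Disjoint (E i) (E j) := by
      rcases lt_or_gt_of_ne hij with h | h
      · exact finsetLT_disjoint (horder i j h)
      · exact (finsetLT_disjoint (horder j i h)).symm
    apply Finset.disjoint_left.mpr
    intro a ha hb
    simp only [Finset.mem_filter] at ha hb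
    exact (Finset.disjoint_left.mp this) ha.2 hb.2
  calc ∑ i, l1 (restrF (E i) x)
      = ∑ i, ∑ q ∈ x.support.filter (· ∈ E i), |x q| := by
        apply Finset.sum_congr rfl
        intro i _
        rw [l1, support_restrF]
        apply Finset.sum_congr rfl
        intro q hq
        simp only [Finset.mem_filter] at hq
        rw [restrF_apply, if_pos hq.2]
    _ = ∑ q ∈ Finset.univ.biUnion (fun i => x.support.filter (· ∈ E i)), |x q| :=
        (Finset.sum_biUnion hdisj).symm
    _ ≤ ∑ q ∈ x.support, |x q| := by
        apply Finset.sum_le_sum_of_subset_of_nonneg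
        · intro q hq
          simp only [Finset.mem_biUnion, Finset.mem_filter] at hq
          obtain ⟨i, _, hq, _⟩ := hq
          exact hq
        · intro q _ _; exact abs_nonneg _
    _ = l1 x := rfl

lemma mixedNorm_nonneg (m : ℕ) (x : ℕ →₀ ℝ) : 0 ≤ mixedNorm t F m x := by
  induction m with
  | zero => exact supNorm_nonneg x
  | succ m ih => exact le_trans ih (le_max_left _ _)

lemma mixedNorm_le_l1 (m : ℕ) (x : ℕ →₀ ℝ) : mixedNorm t F m x ≤ l1 x := by
  induction m generalizing x with
  | zero => exact supNorm_le_l1 x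
  | succ m ih =>
    rw [mixedNorm_succ]
    apply max_le (ih x)
    apply Real.sSup_le _ (l1_nonneg x)
    rintro c ⟨n, k, E, ⟨hne, horder, _⟩, rfl⟩
    calc t n * ∑ i, mixedNorm t F m (restrF (E i) x)
        ≤ 1 * ∑ i, l1 (restrF (E i) x) := by
          apply mul_le_mul (le_of_lt (ht n).2)
            (Finset.sum_le_sum fun i _ => ih _) ?_ zero_le_one
          apply Finset.sum_nonneg
          intro i _
          exact mixedNorm_nonneg ht m _
      _ = ∑ i, l1 (restrF (E i) x) := one_mul _
      _ ≤ l1 x := sum_l1_restr_le ht E horder x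

end Norms
/-! ### Wrapping machinery -/

section Norms2

variable {t : ℕ → ℝ} {F : ℕ → Set (Finset ℕ)} (ht : ∀ n, 0 < t n ∧ t n < 1)
include ht

lemma bddAbove_SSet (m : ℕ) (x : ℕ →₀ ℝ) : BddAbove (SSet t F m x) := by
  refine ⟨l1 x, ?_⟩
  rintro c ⟨n, k, E, ⟨hne, horder, _⟩, rfl⟩
  calc t n * ∑ i, mixedNorm t F m (restrF (E i) x)
      ≤ 1 * ∑ i, l1 (restrF (E i) x) := by
        apply mul_le_mul (le_of_lt (ht n).2)
          (Finset.sum_le_sum fun i _ => mixedNorm_le_l1 ht m _) ?_ zero_le_one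
        apply Finset.sum_nonneg
        intro i _
        exact mixedNorm_nonneg ht m _
    _ = ∑ i, l1 (restrF (E i) x) := one_mul _
    _ ≤ l1 x := sum_l1_restr_le ht E horder x

lemma val_le_mixedNorm (m n : ℕ) {k : ℕ} (E : Fin k → Finset ℕ)
    (hadm : admissibleSeq (F n) E) (x : ℕ →₀ ℝ) :
    t n * ∑ i, mixedNorm t F m (restrF (E i) x) ≤ mixedNorm t F (m + 1) x := by
  rw [mixedNorm_succ]
  exact le_trans (le_csSup (bddAbove_SSet ht m x) ⟨n, k, E, hadm, rfl⟩) (le_max_right _ _)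

omit ht in
lemma mixedNorm_le_succ (m : ℕ) (x : ℕ →₀ ℝ) :
    mixedNorm t F m x ≤ mixedNorm t F (m + 1) x := le_max_left _ _

lemma mixedNorm_zero (m : ℕ) : mixedNorm t F m 0 = 0 :=
  le_antisymm (le_trans (mixedNorm_le_l1 ht m 0) (le_of_eq l1_zero)) (mixedNorm_nonneg ht m 0)

lemma mixedNorm_abs_mono {u x : ℕ →₀ ℝ} (h : ∀ q, |u q| ≤ |x q|) (m : ℕ) :
    mixedNorm t F m u ≤ mixedNorm t F m x := by
  induction m generalizing u x with
  | zero => exact supNorm_mono h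
  | succ m ih =>
    rw [mixedNorm_succ t F m u]
    apply max_le
    · exact le_trans (ih h) (mixedNorm_le_succ m x)
    · apply Real.sSup_le _ (mixedNorm_nonneg ht (m + 1) x)
      rintro c ⟨n, k, E, hadm, rfl⟩
      calc t n * ∑ i, mixedNorm t F m (restrF (E i) u)
          ≤ t n * ∑ i, mixedNorm t F m (restrF (E i) x) := by
            apply mul_le_mul_of_nonneg_left _ (le_of_lt (ht n).1)
            apply Finset.sum_le_sum
            intro i _
            apply ih
            intro q
            rw [restrF_apply, restrF_apply]
            by_cases hq : q ∈ E i
            · rw [if_pos hq, if_pos hq]; exact h q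
            · rw [if_neg hq, if_neg hq]
        _ ≤ mixedNorm t F (m + 1) x := val_le_mixedNorm ht m n E hadm x

lemma mixedNorm_restr_le (E : Finset ℕ) (m : ℕ) (x : ℕ →₀ ℝ) :
    mixedNorm t F m (restrF E x) ≤ mixedNorm t F m x := by
  apply mixedNorm_abs_mono ht _ m
  intro q
  rw [restrF_apply]
  by_cases hq : q ∈ E
  · rw [if_pos hq]
  · rw [if_neg hq, abs_zero]; exact abs_nonneg _

/-- The key wrapping lemma: a weakly admissible (possibly empty-membered) family of
restrictions gives a lower bound for the next norm. -/
lemma weak_wrap (m n : ℕ) (x : ℕ →₀ ℝ) (W : ℕ → Finset ℕ) (s : Finset ℕ)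
    (horder : ∀ p ∈ s, ∀ q ∈ s, p < q → FinsetLT (W p) (W q))
    (hmins : ((s.filter fun p => (W p).Nonempty).image fun p => mino (W p)) ∈ F n) :
    t n * ∑ p ∈ s, mixedNorm t F m (restrF (W p) x) ≤ mixedNorm t F (m + 1) x := by
  classical
  set s' := s.filter (fun p => (W p).Nonempty) with hs'
  set k := s'.card with hk
  set emb := s'.orderEmbOfFin rfl with hemb
  have hmem_emb : ∀ i : Fin k, emb i ∈ s' := fun i => Finset.orderEmbOfFin_mem s' rfl i
  have himg : Finset.univ.image ⇑emb = s' := by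
    apply Finset.coe_injective
    rw [Finset.coe_image, Finset.coe_univ, Set.image_univ]
    exact Finset.range_orderEmbOfFin s' rfl
  have hne : ∀ i : Fin k, (W (emb i)).Nonempty := fun i =>
    (Finset.mem_filter.mp (hmem_emb i)).2
  have hord : ∀ i j : Fin k, i < j → FinsetLT (W (emb i)) (W (emb j)) := by
    intro i j hij
    exact horder _ (Finset.filter_subset _ _ (hmem_emb i)) _
      (Finset.filter_subset _ _ (hmem_emb j)) (emb.strictMono hij)
  have h2 : (Finset.univ.image fun i => mino (W (emb i))) = s'.image fun p => mino (W p) := by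
    conv_rhs => rw [← himg]
    rw [Finset.image_image]
    rfl
  have hadm : admissibleSeq (F n) (fun i : Fin k => W (emb i)) := by
    refine ⟨hne, hord, ?_⟩
    have h1 : (Finset.univ.image fun i => (W (emb i)).min' (hne i)) =
        Finset.univ.image fun i => mino (W (emb i)) :=
      Finset.image_congr fun i _ => (mino_eq_min' (hne i)).symm
    rw [h1.trans h2]
    exact hmins
  have e1 : ∑ p ∈ s', mixedNorm t F m (restrF (W p) x) =
      ∑ p ∈ s, mixedNorm t F m (restrF (W p) x) := by
    apply Finset.sum_filter_of_ne
    intro p _ hp0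
    by_contra hemp
    rw [Finset.not_nonempty_iff_eq_empty.mp hemp, restrF_empty, mixedNorm_zero ht] at hp0
    exact hp0 rfl
  have e2 : ∑ i : Fin k, mixedNorm t F m (restrF (W (emb i)) x) =
      ∑ p ∈ s', mixedNorm t F m (restrF (W p) x) := by
    conv_rhs => rw [← himg]
    exact (Finset.sum_image (f := fun p => mixedNorm t F m (restrF (W p) x))
      fun i _ j _ hij => emb.injective hij).symm
  rw [(e1.symm).trans e2.symm]
  exact val_le_mixedNorm ht m n _ hadm x

end Norms2

/-- Building membership in `comb Fam G` from blocks. -/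
lemma comb_mem_of_blocks {Fam G : Set (Finset ℕ)} (V : ℕ → Finset ℕ) (s : Finset ℕ)
    (horder : ∀ p ∈ s, ∀ q ∈ s, p < q → FinsetLT (V p) (V q))
    (hG : ∀ p ∈ s, V p ∈ G)
    (hmins : ((s.filter fun p => (V p).Nonempty).image fun p => mino (V p)) ∈ Fam) :
    s.biUnion V ∈ comb Fam G := by
  classical
  set s' := s.filter (fun p => (V p).Nonempty) with hs'
  set k := s'.card with hk
  set emb := s'.orderEmbOfFin rfl with hemb
  have hmem_emb : ∀ i : Fin k, emb i ∈ s' := fun i => Finset.orderEmbOfFin_mem s' rfl i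
  have himg : Finset.univ.image ⇑emb = s' := by
    apply Finset.coe_injective
    rw [Finset.coe_image, Finset.coe_univ, Set.image_univ]
    exact Finset.range_orderEmbOfFin s' rfl
  have hne : ∀ i : Fin k, (V (emb i)).Nonempty := fun i =>
    (Finset.mem_filter.mp (hmem_emb i)).2
  have h2 : (Finset.univ.image fun i => mino (V (emb i))) = s'.image fun p => mino (V p) := by
    conv_rhs => rw [← himg]
    rw [Finset.image_image]
    rfl
  refine ⟨k, fun i => V (emb i), ⟨hne, ?_, ?_⟩, ?_, ?_⟩
  · intro i j hij
    exact horder _ (Finset.filter_subset _ _ (hmem_emb i)) _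
      (Finset.filter_subset _ _ (hmem_emb j)) (emb.strictMono hij)
  · have h1 : (Finset.univ.image fun i => (V (emb i)).min' (hne i)) =
        Finset.univ.image fun i => mino (V (emb i)) :=
      Finset.image_congr fun i _ => (mino_eq_min' (hne i)).symm
    rw [h1.trans h2]
    exact hmins
  · intro i
    exact hG _ (Finset.filter_subset _ _ (hmem_emb i))
  · ext a
    rw [Finset.sup_eq_biUnion]
    simp only [Finset.mem_biUnion, Finset.mem_univ, true_and]
    constructor
    · rintro ⟨p, hp, hap⟩
      have hp' : p ∈ s' := Finset.mem_filter.mpr ⟨hp, ⟨a, hap⟩⟩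
      rw [← himg] at hp'
      obtain ⟨i, _, rfl⟩ := Finset.mem_image.mp hp'
      exact ⟨i, hap⟩
    · rintro ⟨i, hap⟩
      exact ⟨emb i, Finset.filter_subset _ _ (hmem_emb i), hap⟩
/-! ### Helpers for spreading minima -/

lemma strictMonoOn_mino {s : Finset ℕ} {V : ℕ → Finset ℕ}
    (hne : ∀ p ∈ s, (V p).Nonempty)
    (hord : ∀ p ∈ s, ∀ q ∈ s, p < q → FinsetLT (V p) (V q)) :
    StrictMonoOn (fun p => mino (V p)) ↑s := by
  intro p hp q hq h
  rw [Finset.mem_coe] at hp hq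
  exact mino_lt_mino (hord p hp q hq h) (hne p hp) (hne q hq)

lemma spread_mino_mem {Fam : Set (Finset ℕ)} (hspr : IsSpreading Fam)
    (s : Finset ℕ) (En Wn : ℕ → Finset ℕ)
    (hEn_ne : ∀ p ∈ s, (En p).Nonempty) (hW_ne : ∀ p ∈ s, (Wn p).Nonempty)
    (hEorder : ∀ p ∈ s, ∀ q ∈ s, p < q → FinsetLT (En p) (En q))
    (hWorder : ∀ p ∈ s, ∀ q ∈ s, p < q → FinsetLT (Wn p) (Wn q))
    (hle : ∀ p ∈ s, mino (En p) ≤ mino (Wn p))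
    (hmem : (s.image fun p => mino (En p)) ∈ Fam) :
    (s.image fun p => mino (Wn p)) ∈ Fam :=
  spread_mem hspr s _ _ (strictMonoOn_mino hEn_ne hEorder)
    (strictMonoOn_mino hW_ne hWorder) hle hmem

lemma image_range_dite (k : ℕ) (E : Fin k → Finset ℕ) (g : Finset ℕ → ℕ) :
    ((Finset.range k).image fun p => g (if h : p < k then E ⟨p, h⟩ else ∅)) =
      Finset.univ.image fun i => g (E i) := by
  ext a
  simp only [Finset.mem_image, Finset.mem_range, Finset.mem_univ, true_and]
  constructor
  · rintro ⟨p, hp, hpa⟩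
    refine ⟨⟨p, hp⟩, ?_⟩
    rwa [dif_pos hp] at hpa
  · rintro ⟨i, hia⟩
    exact ⟨i.val, i.isLt, by rwa [dif_pos i.isLt, Fin.eta]⟩

/-- The minima set of an admissible sequence, in `mino` form over `range k`. -/
lemma adm_mino_image_mem {Fam : Set (Finset ℕ)} {k : ℕ} {E : Fin k → Finset ℕ}
    (hne : ∀ i, (E i).Nonempty) (horder : ∀ i j : Fin k, i < j → FinsetLT (E i) (E j))
    (hmins : (Finset.univ.image fun i => (E i).min' (hne i)) ∈ Fam) :
    ((Finset.range k).image fun p =>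
      mino (if h : p < k then E ⟨p, h⟩ else ∅)) ∈ Fam := by
  rw [image_range_dite k E mino]
  have : (Finset.univ.image fun i => mino (E i)) =
      Finset.univ.image fun i => (E i).min' (hne i) :=
    Finset.image_congr fun i _ => mino_eq_min' (hne i)
  rwa [this]
/-! ### Spreading to the right increases the norm -/

section SpreadMono

variable {t : ℕ → ℝ} {F : ℕ → Set (Finset ℕ)}

lemma mixedNorm_spread_mono (ht : ∀ n, 0 < t n ∧ t n < 1) (hreg : ∀ n, IsRegular (F n))
    {i j : ℕ → ℕ} (hi : StrictMono i) (hj : StrictMono j)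
    (hij : ∀ q, i q ≤ j q) (m : ℕ) (a : ℕ →₀ ℝ) :
    mixedNorm t F m (Finsupp.mapDomain i a) ≤ mixedNorm t F m (Finsupp.mapDomain j a) := by
  induction m generalizing a with
  | zero =>
    show supNorm _ ≤ supNorm _
    rw [supNorm_mapDomain hi.injective, supNorm_mapDomain hj.injective]
  | succ m ih =>
    rw [mixedNorm_succ t F m (Finsupp.mapDomain i a)]
    apply max_le
    · exact le_trans (ih a) (mixedNorm_le_succ m _)
    · apply Real.sSup_le _ (mixedNorm_nonneg ht (m + 1) _)
      rintro c ⟨n, k, E, ⟨hne, horder, hmins⟩, rfl⟩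
      classical
      set b : Fin k → (ℕ →₀ ℝ) := fun l => a.filter (fun q => i q ∈ E l) with hb
      set W : ℕ → Finset ℕ :=
        fun p => if h : p < k then ((b ⟨p, h⟩).support.image j) else ∅ with hW
      set En : ℕ → Finset ℕ := fun p => if h : p < k then E ⟨p, h⟩ else ∅ with hEn
      have hWsupp : ∀ (p : ℕ) (h : p < k) (u : ℕ), u ∈ (b ⟨p, h⟩).support →
          u ∈ a.support ∧ i u ∈ E ⟨p, h⟩ := by
        intro p h u hu
        rw [hb] at hu
        simp only [Finsupp.support_filter, Finset.mem_filter] at hu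
        exact hu
      have horderW : ∀ p ∈ Finset.range k, ∀ q ∈ Finset.range k, p < q →
          FinsetLT (W p) (W q) := by
        intro p hp q hq hpq
        rw [Finset.mem_range] at hp hq
        intro u hu v hv
        rw [hW] at hu hv
        simp only [dif_pos hp] at hu
        simp only [dif_pos hq] at hv
        obtain ⟨u', hu', rfl⟩ := Finset.mem_image.mp hu
        obtain ⟨v', hv', rfl⟩ := Finset.mem_image.mp hv
        have h1 := (hWsupp p hp u' hu').2
        have h2 := (hWsupp q hq v' hv').2
        have : i u' < i v' :=
          horder ⟨p, hp⟩ ⟨q, hq⟩ (by simpa using hpq) _ h1 _ h2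
        exact hj (hi.lt_iff_lt.mp this)
      have hEnorder : ∀ p ∈ Finset.range k, ∀ q ∈ Finset.range k, p < q →
          FinsetLT (En p) (En q) := by
        intro p hp q hq hpq
        rw [Finset.mem_range] at hp hq
        rw [hEn]
        simp only [dif_pos hp, dif_pos hq]
        exact horder ⟨p, hp⟩ ⟨q, hq⟩ (by simpa using hpq)
      calc t n * ∑ l, mixedNorm t F m (restrF (E l) (Finsupp.mapDomain i a))
          = t n * ∑ l, mixedNorm t F m (Finsupp.mapDomain i (b l)) := by
            congr 1
            exact Finset.sum_congr rfl fun l _ => by rw [restrF_mapDomain hi.injective]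
        _ ≤ t n * ∑ l, mixedNorm t F m (Finsupp.mapDomain j (b l)) := by
            apply mul_le_mul_of_nonneg_left _ (le_of_lt (ht n).1)
            exact Finset.sum_le_sum fun l _ => ih (b l)
        _ = t n * ∑ p ∈ Finset.range k,
              mixedNorm t F m (restrF (W p) (Finsupp.mapDomain j a)) := by
            congr 1
            rw [← Fin.sum_univ_eq_sum_range
              (fun p => mixedNorm t F m (restrF (W p) (Finsupp.mapDomain j a))) k]
            apply Finset.sum_congr rfl
            intro l _
            rw [hb, mapDomain_filter_eq_restr hj.injective]
            congr 2
            rw [hW]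
            simp only [dif_pos l.isLt, Fin.eta]
            rfl
        _ ≤ mixedNorm t F (m + 1) (Finsupp.mapDomain j a) := by
            apply weak_wrap ht m n _ W (Finset.range k) horderW
            set s₂ := (Finset.range k).filter (fun p => (W p).Nonempty) with hs₂
            have hs₂sub : s₂ ⊆ Finset.range k := Finset.filter_subset _ _
            apply spread_mino_mem (hreg n).2.1 s₂ En W
            · intro p hp
              have := Finset.mem_range.mp (hs₂sub hp)
              rw [hEn]
              simp only [dif_pos this]
              exact hne _
            · exact fun p hp => (Finset.mem_filter.mp hp).2
            · exact fun p hp q hq h => hEnorder p (hs₂sub hp) q (hs₂sub hq) h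
            · exact fun p hp q hq h => horderW p (hs₂sub hp) q (hs₂sub hq) h
            · -- mino (En p) ≤ mino (W p)
              intro p hp
              have hpk := Finset.mem_range.mp (hs₂sub hp)
              have hWne : (W p).Nonempty := (Finset.mem_filter.mp hp).2
              have hWp : W p = (b ⟨p, hpk⟩).support.image j := by
                rw [hW]; simp only [dif_pos hpk]
              rw [hWp] at hWne ⊢
              obtain ⟨u, hu, hju⟩ := Finset.mem_image.mp (mino_mem hWne)
              have hiu := (hWsupp p hpk u hu).2
              calc mino (En p) ≤ i u := by
                    apply mino_le
                    rw [hEn]; simp only [dif_pos hpk]; exact hiu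
                _ ≤ j u := hij u
                _ = mino ((b ⟨p, hpk⟩).support.image j) := hju
            · -- the original minima
              apply hered_mem (hreg n).1
                (adm_mino_image_mem (Fam := F n) hne horder hmins)
              exact Finset.image_subset_image hs₂sub

end SpreadMono
/-! ### Normalizing an admissible sequence -/

lemma normalize_adm {t : ℕ → ℝ} {F : ℕ → Set (Finset ℕ)} (ht : ∀ n, 0 < t n ∧ t n < 1)
    (hreg : ∀ n, IsRegular (F n)) (m n : ℕ) {k : ℕ} (E : Fin k → Finset ℕ)
    (hadm : admissibleSeq (F n) E) (x : ℕ →₀ ℝ) :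
    ∃ (k' : ℕ) (G : Fin k' → Finset ℕ),
      admissibleSeq (F n) G ∧ (∀ l, (G l).Nonempty) ∧ (∀ l, G l ⊆ x.support) ∧
      ∑ i, mixedNorm t F m (restrF (E i) x) = ∑ l, mixedNorm t F m (restrF (G l) x) := by
  classical
  obtain ⟨hne, horder, hmins⟩ := hadm
  set En : ℕ → Finset ℕ := fun p => if h : p < k then E ⟨p, h⟩ else ∅ with hEn
  set Gn : ℕ → Finset ℕ := fun p => En p ∩ x.support with hGn
  set s₁ := (Finset.range k).filter (fun p => (Gn p).Nonempty) with hs₁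
  have hs₁sub : s₁ ⊆ Finset.range k := Finset.filter_subset _ _
  set k' := s₁.card with hk'
  set emb := s₁.orderEmbOfFin rfl with hemb
  have hmem_emb : ∀ i : Fin k', emb i ∈ s₁ := fun i => Finset.orderEmbOfFin_mem s₁ rfl i
  have himg : Finset.univ.image ⇑emb = s₁ := by
    apply Finset.coe_injective
    rw [Finset.coe_image, Finset.coe_univ, Set.image_univ]
    exact Finset.range_orderEmbOfFin s₁ rfl
  have hEnorder : ∀ p ∈ Finset.range k, ∀ q ∈ Finset.range k, p < q →
      FinsetLT (En p) (En q) := by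
    intro p hp q hq hpq
    rw [Finset.mem_range] at hp hq
    rw [hEn]
    simp only [dif_pos hp, dif_pos hq]
    exact horder ⟨p, hp⟩ ⟨q, hq⟩ (by simpa using hpq)
  have hGnorder : ∀ p ∈ Finset.range k, ∀ q ∈ Finset.range k, p < q →
      FinsetLT (Gn p) (Gn q) := by
    intro p hp q hq hpq
    exact (hEnorder p hp q hq hpq).mono Finset.inter_subset_left Finset.inter_subset_left
  have hGne : ∀ i : Fin k', (Gn (emb i)).Nonempty := fun i =>
    (Finset.mem_filter.mp (hmem_emb i)).2
  have hminsG : (s₁.image fun p => mino (Gn p)) ∈ F n := by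
    apply spread_mino_mem (hreg n).2.1 s₁ En Gn
    · intro p hp
      have hpk := Finset.mem_range.mp (hs₁sub hp)
      rw [hEn]
      simp only [dif_pos hpk]
      exact hne _
    · exact fun p hp => (Finset.mem_filter.mp hp).2
    · exact fun p hp q hq h => hEnorder p (hs₁sub hp) q (hs₁sub hq) h
    · exact fun p hp q hq h => hGnorder p (hs₁sub hp) q (hs₁sub hq) h
    · intro p hp
      exact mino_le (Finset.inter_subset_left (mino_mem ((Finset.mem_filter.mp hp).2)))
    · exact hered_mem (hreg n).1 (adm_mino_image_mem (Fam := F n) hne horder hmins)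
        (Finset.image_subset_image hs₁sub)
  refine ⟨k', fun i => Gn (emb i), ⟨hGne, ?_, ?_⟩, hGne, ?_, ?_⟩
  · intro i j hij
    exact hGnorder _ (hs₁sub (hmem_emb i)) _ (hs₁sub (hmem_emb j)) (emb.strictMono hij)
  · have h1 : (Finset.univ.image fun i => (Gn (emb i)).min' (hGne i)) =
        Finset.univ.image fun i => mino (Gn (emb i)) :=
      Finset.image_congr fun i _ => (mino_eq_min' (hGne i)).symm
    have h2 : (Finset.univ.image fun i => mino (Gn (emb i))) =
        s₁.image fun p => mino (Gn p) := by
      conv_rhs => rw [← himg]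
      rw [Finset.image_image]
      rfl
    rw [h1.trans h2]
    exact hminsG
  · intro i
    rw [hGn]
    exact Finset.inter_subset_right
  · -- the sums agree
    have e0 : ∑ i, mixedNorm t F m (restrF (E i) x) =
        ∑ p ∈ Finset.range k, mixedNorm t F m (restrF (Gn p) x) := by
      rw [← Fin.sum_univ_eq_sum_range (fun p => mixedNorm t F m (restrF (Gn p) x)) k]
      apply Finset.sum_congr rfl
      intro l _
      congr 1
      rw [hGn, hEn]
      simp only [dif_pos l.isLt, Fin.eta]
      rw [restrF_inter_support]
    have e1 : ∑ p ∈ s₁, mixedNorm t F m (restrF (Gn p) x) =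
        ∑ p ∈ Finset.range k, mixedNorm t F m (restrF (Gn p) x) := by
      apply Finset.sum_filter_of_ne
      intro p _ hp0
      by_contra hemp
      rw [Finset.not_nonempty_iff_eq_empty.mp hemp, restrF_empty, mixedNorm_zero ht] at hp0
      exact hp0 rfl
    have e2 : ∑ i : Fin k', mixedNorm t F m (restrF (Gn (emb i)) x) =
        ∑ p ∈ s₁, mixedNorm t F m (restrF (Gn p) x) := by
      conv_rhs => rw [← himg]
      exact (Finset.sum_image (f := fun p => mixedNorm t F m (restrF (Gn p) x))
        fun i _ j _ hij => emb.injective hij).symm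
    rw [e0, ← e1, ← e2]
/-! ### The main three-set splitting claim -/

lemma sum_range_three (f : ℕ → ℝ) : ∑ r ∈ Finset.range 3, f r = f 0 + f 1 + f 2 := by
  rw [Finset.sum_range_succ, Finset.sum_range_succ, Finset.sum_range_one]

set_option maxHeartbeats 2000000 in
lemma main_claim {t : ℕ → ℝ} {F : ℕ → Set (Finset ℕ)} (ht : ∀ n, 0 < t n ∧ t n < 1)
    (hreg : ∀ n, IsRegular (F n))
    (htame : ∀ n, (∃ j : ℕ, F n = Ak j) ∨ comb (F n) (Ak 3) ⊆ pairFam (F n) (F n))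
    {i : ℕ → ℕ} (hi : StrictMono i) (m : ℕ) (a : ℕ →₀ ℝ) :
    ∃ E₁ E₂ E₃ : Finset ℕ,
      FinsetLT E₁ E₂ ∧ FinsetLT E₂ E₃ ∧ FinsetLT E₁ E₃ ∧
      E₁ ⊆ (Finsupp.mapDomain i a).support ∧ E₂ ⊆ (Finsupp.mapDomain i a).support ∧
      E₃ ⊆ (Finsupp.mapDomain i a).support ∧
      mixedNorm t F m (Finsupp.mapDomain (fun q => i (q + 1)) a) ≤
        mixedNorm t F m (restrF E₁ (Finsupp.mapDomain i a)) +
        mixedNorm t F m (restrF E₂ (Finsupp.mapDomain i a)) +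
        mixedNorm t F m (restrF E₃ (Finsupp.mapDomain i a)) := by
  classical
  have hσ : StrictMono (fun q => i (q + 1)) := fun p q h => hi (by omega)
  induction m generalizing a with
  | zero =>
    refine ⟨(Finsupp.mapDomain i a).support, ∅, ∅, finsetLT_empty_right _,
      finsetLT_empty_right _, finsetLT_empty_right _, subset_rfl,
      Finset.empty_subset _, Finset.empty_subset _, ?_⟩
    rw [restrF_eq_self subset_rfl, restrF_empty]
    show supNorm _ ≤ supNorm _ + supNorm 0 + supNorm 0
    have h0 : supNorm (0 : ℕ →₀ ℝ) = 0 := mixedNorm_zero (t := t) (F := F) ht 0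
    rw [h0, add_zero, add_zero, supNorm_mapDomain hσ.injective,
      supNorm_mapDomain hi.injective]
  | succ m ih =>
    set σ : ℕ → ℕ := fun q => i (q + 1) with hσdef
    set Y : ℕ →₀ ℝ := Finsupp.mapDomain i a with hY
    set X : ℕ →₀ ℝ := Finsupp.mapDomain σ a with hX
    -- the finite set of candidate triples
    set P : Finset ((Finset ℕ × Finset ℕ) × Finset ℕ) :=
      ((Y.support.powerset ×ˢ Y.support.powerset) ×ˢ Y.support.powerset).filter
        (fun r => FinsetLT r.1.1 r.1.2 ∧ FinsetLT r.1.2 r.2 ∧ FinsetLT r.1.1 r.2) with hP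
    have hPmem : ∀ r ∈ P, r.1.1 ⊆ Y.support ∧ r.1.2 ⊆ Y.support ∧ r.2 ⊆ Y.support ∧
        FinsetLT r.1.1 r.1.2 ∧ FinsetLT r.1.2 r.2 ∧ FinsetLT r.1.1 r.2 := by
      intro r hr
      rw [hP, Finset.mem_filter, Finset.mem_product, Finset.mem_product] at hr
      obtain ⟨⟨⟨ha1, ha2⟩, ha3⟩, hb1, hb2, hb3⟩ := hr
      exact ⟨Finset.mem_powerset.mp ha1, Finset.mem_powerset.mp ha2,
        Finset.mem_powerset.mp ha3, hb1, hb2, hb3⟩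
    have hPmem' : ∀ E₁ E₂ E₃ : Finset ℕ, E₁ ⊆ Y.support → E₂ ⊆ Y.support → E₃ ⊆ Y.support →
        FinsetLT E₁ E₂ → FinsetLT E₂ E₃ → FinsetLT E₁ E₃ → ((E₁, E₂), E₃) ∈ P := by
      intro E₁ E₂ E₃ h1 h2 h3 h4 h5 h6
      rw [hP, Finset.mem_filter, Finset.mem_product, Finset.mem_product]
      exact ⟨⟨⟨Finset.mem_powerset.mpr h1, Finset.mem_powerset.mpr h2⟩,
        Finset.mem_powerset.mpr h3⟩, h4, h5, h6⟩
    set g : (Finset ℕ × Finset ℕ) × Finset ℕ → ℝ := fun r =>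
      mixedNorm t F (m + 1) (restrF r.1.1 Y) + mixedNorm t F (m + 1) (restrF r.1.2 Y) +
        mixedNorm t F (m + 1) (restrF r.2 Y) with hg
    have hPne : ((∅, ∅), ∅) ∈ P := hPmem' ∅ ∅ ∅ (Finset.empty_subset _)
      (Finset.empty_subset _) (Finset.empty_subset _) (finsetLT_empty_left _)
      (finsetLT_empty_left _) (finsetLT_empty_left _)
    have hPgne : (P.image g).Nonempty := ⟨g ((∅, ∅), ∅), Finset.mem_image_of_mem g hPne⟩
    set A : ℝ := (P.image g).max' hPgne with hA
    have hgA : ∀ r ∈ P, g r ≤ A := fun r hr =>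
      Finset.le_max' _ _ (Finset.mem_image_of_mem g hr)
    have hA0 : 0 ≤ A := by
      refine le_trans ?_ (hgA _ hPne)
      rw [hg]
      simp only [restrF_empty]
      rw [mixedNorm_zero ht]
      norm_num
    suffices hXA : mixedNorm t F (m + 1) X ≤ A by
      obtain ⟨r, hrP, hrA⟩ := Finset.mem_image.mp ((P.image g).max'_mem hPgne)
      obtain ⟨hs1, hs2, hs3, hl1, hl2, hl3⟩ := hPmem r hrP
      exact ⟨r.1.1, r.1.2, r.2, hl1, hl2, hl3, hs1, hs2, hs3,
        le_trans hXA (le_of_eq hrA.symm)⟩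
    rw [mixedNorm_succ]
    apply max_le
    · -- first branch : induction hypothesis at level m
      obtain ⟨e₁, e₂, e₃, l12, l23, l13, s1, s2, s3, hbd⟩ := ih a
      refine le_trans hbd (le_trans ?_ (hgA _ (hPmem' e₁ e₂ e₃ s1 s2 s3 l12 l23 l13)))
      rw [hg]
      exact add_le_add (add_le_add (mixedNorm_le_succ m _) (mixedNorm_le_succ m _))
        (mixedNorm_le_succ m _)
    · -- second branch : the suprema
      apply Real.sSup_le _ hA0
      rintro c ⟨n, k, E, hadm, rfl⟩
      obtain ⟨k', G, hadmG, hGne, hGsub, hsum⟩ := normalize_adm ht hreg m n E hadm X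
      rw [hsum]
      obtain ⟨hGne', hGorder, hGmins⟩ := hadmG
      by_cases hk0 : k' = 0
      · subst hk0
        rw [show (∑ l : Fin 0, mixedNorm t F m (restrF (G l) X)) = 0 from rfl, mul_zero]
        exact hA0
      have hk1 : 1 ≤ k' := Nat.one_le_iff_ne_zero.mpr hk0
      -- data for each l
      set b : Fin k' → (ℕ →₀ ℝ) := fun l => a.filter (fun q => σ q ∈ G l) with hb
      set H : Fin k' → Finset ℕ := fun l => (b l).support.image i with hH
      have hbsupp : ∀ (l : Fin k') (u : ℕ), u ∈ (b l).support →
          u ∈ a.support ∧ σ u ∈ G l := by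
        intro l u hu
        rw [hb] at hu
        simp only [Finsupp.support_filter, Finset.mem_filter] at hu
        exact hu
      have hXGb : ∀ l, restrF (G l) X = Finsupp.mapDomain σ (b l) := by
        intro l
        rw [hX, restrF_mapDomain hσ.injective, hb]
      have hYHb : ∀ l, Finsupp.mapDomain i (b l) = restrF (H l) Y := by
        intro l
        rw [hb, hY, hH, mapDomain_filter_eq_restr hi.injective, hb]
      have hHsubY : ∀ l, H l ⊆ Y.support := by
        intro l
        rw [hH, hY, Finsupp.mapDomain_support_of_injective hi.injective]
        apply Finset.image_subset_image
        intro u hu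
        exact (hbsupp l u hu).1
      have hHord : ∀ l l' : Fin k', l < l' → FinsetLT (H l) (H l') := by
        intro l l' hll u hu v hv
        rw [hH] at hu hv
        obtain ⟨u', hu', rfl⟩ := Finset.mem_image.mp hu
        obtain ⟨v', hv', rfl⟩ := Finset.mem_image.mp hv
        have h1 := (hbsupp l u' hu').2
        have h2 := (hbsupp l' v' hv').2
        have : σ u' < σ v' := hGorder l l' hll _ h1 _ h2
        exact hi (hσ.lt_iff_lt.mp this)
      -- the IH data, reordered so that nonempty sets come first
      have hIH : ∀ l : Fin k', ∃ T : Finset ℕ × Finset ℕ × Finset ℕ,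
          FinsetLT T.1 T.2.1 ∧ FinsetLT T.2.1 T.2.2 ∧ FinsetLT T.1 T.2.2 ∧
          T.1 ⊆ H l ∧ T.2.1 ⊆ H l ∧ T.2.2 ⊆ H l ∧
          (T.2.1.Nonempty → T.1.Nonempty) ∧ (T.2.2.Nonempty → T.2.1.Nonempty) ∧
          mixedNorm t F m (restrF (G l) X) ≤
            mixedNorm t F m (restrF T.1 Y) + mixedNorm t F m (restrF T.2.1 Y) +
            mixedNorm t F m (restrF T.2.2 Y) := by
        intro l
        obtain ⟨e₁, e₂, e₃, l12, l23, l13, s1, s2, s3, hbd⟩ := ih (b l)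
        rw [Finsupp.mapDomain_support_of_injective hi.injective] at s1 s2 s3
        have s1' : e₁ ⊆ H l := by rw [hH]; exact s1
        have s2' : e₂ ⊆ H l := by rw [hH]; exact s2
        have s3' : e₃ ⊆ H l := by rw [hH]; exact s3
        have hres : ∀ e : Finset ℕ, e ⊆ H l →
            restrF e (Finsupp.mapDomain i (b l)) = restrF e Y := by
          intro e he
          rw [hYHb l, restrF_restrF, Finset.inter_eq_left.mpr he]
        rw [hres e₁ s1', hres e₂ s2', hres e₃ s3'] at hbd
        rw [← hXGb l] at hbd
        have hz : mixedNorm t F m (restrF ∅ Y) = 0 := by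
          rw [restrF_empty, mixedNorm_zero ht]
        by_cases h1 : e₁.Nonempty
        · by_cases h2 : e₂.Nonempty
          · exact ⟨(e₁, e₂, e₃), l12, l23, l13, s1', s2', s3',
              fun _ => h1, fun _ => h2, hbd⟩
          · rw [Finset.not_nonempty_iff_eq_empty] at h2
            subst h2
            refine ⟨(e₁, e₃, ∅), l13, finsetLT_empty_right _, finsetLT_empty_right _,
              s1', s3', Finset.empty_subset _, fun _ => h1,
              fun he => absurd he Finset.not_nonempty_empty, ?_⟩
            rw [hz] at hbd ⊢
            linarith
        · rw [Finset.not_nonempty_iff_eq_empty] at h1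
          subst h1
          by_cases h2 : e₂.Nonempty
          · refine ⟨(e₂, e₃, ∅), l23, finsetLT_empty_right _, finsetLT_empty_right _,
              s2', s3', Finset.empty_subset _, fun _ => h2,
              fun he => absurd he Finset.not_nonempty_empty, ?_⟩
            rw [hz] at hbd ⊢
            linarith
          · rw [Finset.not_nonempty_iff_eq_empty] at h2
            subst h2
            refine ⟨(e₃, ∅, ∅), finsetLT_empty_right _, finsetLT_empty_left _,
              finsetLT_empty_right _, s3', Finset.empty_subset _, Finset.empty_subset _,
              fun he => absurd he Finset.not_nonempty_empty, fun he => he, ?_⟩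
            rw [hz] at hbd ⊢
            linarith
      choose T hT12 hT23 hT13 hTs1 hTs2 hTs3 hTP1 hTP2 hTbd using hIH
      set T1 : Fin k' → Finset ℕ := fun l => (T l).1 with hT1d
      set T2 : Fin k' → Finset ℕ := fun l => (T l).2.1 with hT2d
      set T3 : Fin k' → Finset ℕ := fun l => (T l).2.2 with hT3d
      set W : ℕ → Finset ℕ := fun p =>
        if h : p / 3 < k' then
          (if p % 3 = 0 then T1 ⟨p / 3, h⟩ else if p % 3 = 1 then T2 ⟨p / 3, h⟩
            else T3 ⟨p / 3, h⟩)
        else ∅ with hW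
      have hWeq : ∀ (p : ℕ) (l : Fin k'), p / 3 = l.val →
          W p = (if p % 3 = 0 then T1 l else if p % 3 = 1 then T2 l else T3 l) := by
        intro p l hpl
        have h : p / 3 < k' := by rw [hpl]; exact l.isLt
        rw [hW]
        simp only [dif_pos h]
        have : (⟨p / 3, h⟩ : Fin k') = l := Fin.ext hpl
        rw [this]
      have hWempty : ∀ p, 3 * k' ≤ p → W p = ∅ := by
        intro p hp
        rw [hW]
        have : ¬ (p / 3 < k') := by omega
        simp only [dif_neg this]
      have hWne_lt : ∀ p, (W p).Nonempty → p < 3 * k' := by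
        intro p hp
        by_contra hc
        rw [hWempty p (by omega)] at hp
        exact Finset.not_nonempty_empty hp
      have hWsub : ∀ (p : ℕ) (h : p / 3 < k'), W p ⊆ H ⟨p / 3, h⟩ := by
        intro p h
        rw [hW]
        simp only [dif_pos h]
        split_ifs
        · exact hTs1 _
        · exact hTs2 _
        · exact hTs3 _
      have hWsubY : ∀ p, W p ⊆ Y.support := by
        intro p
        by_cases h : p / 3 < k'
        · exact subset_trans (hWsub p h) (hHsubY _)
        · rw [hW]; simp only [dif_neg h]; exact Finset.empty_subset _
      have hWord : ∀ p ∈ Finset.range (3 * k'), ∀ q ∈ Finset.range (3 * k'), p < q →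
          FinsetLT (W p) (W q) := by
        intro p hp q hq hpq
        rw [Finset.mem_range] at hp hq
        have hpk : p / 3 < k' := by omega
        have hqk : q / 3 < k' := by omega
        by_cases hl : p / 3 = q / 3
        · have hr : p % 3 < q % 3 := by omega
          rw [hWeq p ⟨q / 3, hqk⟩ hl, hWeq q ⟨q / 3, hqk⟩ rfl]
          have h3p : p % 3 = 0 ∨ p % 3 = 1 ∨ p % 3 = 2 := by omega
          rcases h3p with h3p | h3p | h3p
          · rw [if_pos h3p]
            rcases (by omega : q % 3 = 1 ∨ q % 3 = 2) with h3q | h3q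
            · rw [if_neg (by omega), if_pos h3q]; exact hT12 _
            · rw [if_neg (by omega), if_neg (by omega)]; exact hT13 _
          · rw [if_neg (by omega), if_pos h3p]
            have h3q : q % 3 = 2 := by omega
            rw [if_neg (by omega), if_neg (by omega)]; exact hT23 _
          · omega
        · have hll : p / 3 < q / 3 := by omega
          exact (hHord ⟨p / 3, hpk⟩ ⟨q / 3, hqk⟩ hll).mono (hWsub p hpk) (hWsub q hqk)
      have hW0 : ∀ l : Fin k', W (3 * (l : ℕ)) = T1 l := by
        intro l
        rw [hWeq _ l (by omega), if_pos (by omega)]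
      have hW1 : ∀ l : Fin k', W (3 * (l : ℕ) + 1) = T2 l := by
        intro l
        rw [hWeq _ l (by omega), if_neg (by omega), if_pos (by omega)]
      have hW2 : ∀ l : Fin k', W (3 * (l : ℕ) + 2) = T3 l := by
        intro l
        rw [hWeq _ l (by omega), if_neg (by omega), if_neg (by omega)]
      have hsum2 : ∑ l : Fin k', mixedNorm t F m (restrF (G l) X) ≤
          ∑ p ∈ Finset.range (3 * k'), mixedNorm t F m (restrF (W p) Y) := by
        have e1 : ∀ l : Fin k', mixedNorm t F m (restrF (G l) X) ≤
            ∑ r ∈ Finset.range 3, mixedNorm t F m (restrF (W (3 * (l : ℕ) + r)) Y) := by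
          intro l
          rw [sum_range_three]
          rw [show 3 * (l : ℕ) + 0 = 3 * (l : ℕ) by ring]
          rw [hW0 l, hW1 l, hW2 l]
          exact hTbd l
        calc ∑ l : Fin k', mixedNorm t F m (restrF (G l) X)
            ≤ ∑ l : Fin k', ∑ r ∈ Finset.range 3,
                mixedNorm t F m (restrF (W (3 * (l : ℕ) + r)) Y) :=
              Finset.sum_le_sum fun l _ => e1 l
          _ = ∑ l ∈ Finset.range k', ∑ r ∈ Finset.range 3,
                mixedNorm t F m (restrF (W (3 * l + r)) Y) :=
              Fin.sum_univ_eq_sum_range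
                (fun l => ∑ r ∈ Finset.range 3,
                  mixedNorm t F m (restrF (W (3 * l + r)) Y)) k'
          _ = ∑ p ∈ Finset.range k' ×ˢ Finset.range 3,
                mixedNorm t F m (restrF (W (3 * p.1 + p.2)) Y) := by
              rw [Finset.sum_product]
          _ = ∑ p ∈ Finset.range (3 * k'), mixedNorm t F m (restrF (W p) Y) := by
              apply Finset.sum_nbij' (fun pr => 3 * pr.1 + pr.2) (fun p => (p / 3, p % 3))
              · intro pr hpr
                rw [Finset.mem_product, Finset.mem_range, Finset.mem_range] at hpr
                rw [Finset.mem_range]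
                omega
              · intro p hp
                rw [Finset.mem_range] at hp
                rw [Finset.mem_product, Finset.mem_range, Finset.mem_range]
                omega
              · intro pr hpr
                rw [Finset.mem_product, Finset.mem_range, Finset.mem_range] at hpr
                ext <;> simp <;> omega
              · intro p _
                omega
              · intro pr _
                rfl
      -- minima facts
      have hGX : ∀ l : Fin k', ∃ p, σ p = mino (G l) := by
        intro l
        have := hGsub l (mino_mem (hGne l))
        rw [hX, Finsupp.mapDomain_support_of_injective hσ.injective] at this
        obtain ⟨p, _, hp⟩ := Finset.mem_image.mp this
        exact ⟨p, hp⟩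
      choose pG hpG using hGX
      have hHmem : ∀ (l : Fin k') (u : ℕ), u ∈ H l → ∃ v, i v = u ∧ σ v ∈ G l := by
        intro l u hu
        rw [hH] at hu
        obtain ⟨v, hv, rfl⟩ := Finset.mem_image.mp hu
        exact ⟨v, rfl, (hbsupp l v hv).2⟩
      have key1 : ∀ l : Fin k', (T2 l).Nonempty → mino (G l) ≤ mino (T2 l) := by
        intro l h2
        have h1 : (T1 l).Nonempty := hTP1 l h2
        obtain ⟨u1, hu1, hσu1⟩ := hHmem l _ (hTs1 l (mino_mem h1))
        obtain ⟨u2, hu2, _⟩ := hHmem l _ (hTs2 l (mino_mem h2))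
        have hlt : i u1 < i u2 := by
          rw [hu1, hu2]
          exact mino_lt_mino (hT12 l) h1 h2
        have hu12 : u1 < u2 := hi.lt_iff_lt.mp hlt
        have hpu : pG l ≤ u1 := by
          have h := mino_le hσu1
          rw [← hpG l] at h
          exact hσ.le_iff_le.mp h
        calc mino (G l) = σ (pG l) := (hpG l).symm
          _ = i (pG l + 1) := rfl
          _ ≤ i u2 := hi.le_iff_le.mpr (by omega)
          _ = mino (T2 l) := hu2
      have key2 : ∀ l : Fin k', (T3 l).Nonempty → mino (G l) ≤ mino (T3 l) := by
        intro l h3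
        have h2 : (T2 l).Nonempty := hTP2 l h3
        exact le_trans (key1 l h2) (le_of_lt (mino_lt_mino (hT23 l) h2 h3))
      have key3 : ∀ l l' : Fin k', l < l' → (T1 l').Nonempty →
          mino (G l) ≤ mino (T1 l') := by
        intro l l' hll h1
        obtain ⟨u, hu, hσu⟩ := hHmem l' _ (hTs1 l' (mino_mem h1))
        have hlt : mino (G l) < σ u := hGorder l l' hll _ (mino_mem (hGne l)) _ hσu
        rw [← hpG l] at hlt
        have hpu : pG l < u := hσ.lt_iff_lt.mp hlt
        calc mino (G l) = σ (pG l) := (hpG l).symm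
          _ = i (pG l + 1) := rfl
          _ ≤ i u := hi.le_iff_le.mpr (by omega)
          _ = mino (T1 l') := hu
      have keyW : ∀ (l : Fin k') (p : ℕ), 3 * (l : ℕ) + 1 ≤ p → p ≤ 3 * (l : ℕ) + 3 →
          (W p).Nonempty → mino (G l) ≤ mino (W p) := by
        intro l p hp1 hp2 hpne
        rcases (by omega : p = 3 * (l : ℕ) + 1 ∨ p = 3 * (l : ℕ) + 2 ∨
            p = 3 * (l : ℕ) + 3) with rfl | rfl | rfl
        · rw [hW1 l] at hpne ⊢; exact key1 l hpne
        · rw [hW2 l] at hpne ⊢; exact key2 l hpne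
        · have hlt : (l : ℕ) + 1 < k' := by
            by_contra hc
            rw [hWempty _ (by omega)] at hpne
            exact Finset.not_nonempty_empty hpne
          have hww : W (3 * (l : ℕ) + 3) = T1 ⟨(l : ℕ) + 1, hlt⟩ := by
            rw [hWeq _ ⟨(l : ℕ) + 1, hlt⟩
              (show (3 * (l : ℕ) + 3) / 3 = (l : ℕ) + 1 by omega), if_pos (by omega)]
          rw [hww] at hpne ⊢
          exact key3 l ⟨(l : ℕ) + 1, hlt⟩ (Fin.lt_def.mpr (Nat.lt_succ_self _)) hpne
      -- helper : FinsetLT between biUnions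
      have hLTU : ∀ s s' : Finset ℕ, s ⊆ Finset.range (3 * k') →
          s' ⊆ Finset.range (3 * k') → (∀ p ∈ s, ∀ q ∈ s', p < q) →
          FinsetLT (s.biUnion W) (s'.biUnion W) := by
        intro s s' hs hs' hlt a ha b hb
        obtain ⟨p, hp, hap⟩ := Finset.mem_biUnion.mp ha
        obtain ⟨q, hq, hbq⟩ := Finset.mem_biUnion.mp hb
        exact hWord p (hs hp) q (hs' hq) (hlt p hp q hq) a hap b hbq
      have hUsub : ∀ s : Finset ℕ, s.biUnion W ⊆ Y.support :=
        fun s => Finset.biUnion_subset.mpr fun p _ => hWsubY p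
      -- wrapping a chunk whose minima lie in a member of `F n`
      have wrap : ∀ (s : Finset ℕ) (M : Finset ℕ), s ⊆ Finset.range (3 * k') → M ∈ F n →
          (∀ p ∈ s, (W p).Nonempty → mino (W p) ∈ M) →
          t n * ∑ p ∈ s, mixedNorm t F m (restrF (W p) Y) ≤
            mixedNorm t F (m + 1) (restrF (s.biUnion W) Y) := by
        intro s M hs hM hmins
        have hrw : ∑ p ∈ s, mixedNorm t F m (restrF (W p) Y) =
            ∑ p ∈ s, mixedNorm t F m (restrF (W p) (restrF (s.biUnion W) Y)) := by
          apply Finset.sum_congr rfl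
          intro p hp
          rw [restrF_restrF, Finset.inter_eq_left.mpr (Finset.subset_biUnion_of_mem W hp)]
        rw [hrw]
        apply weak_wrap ht m n _ W s
        · intro p hp q hq hpq
          exact hWord p (hs hp) q (hs hq) hpq
        · apply hered_mem (hreg n).1 hM
          intro x hx
          obtain ⟨p, hp, rfl⟩ := Finset.mem_image.mp hx
          rw [Finset.mem_filter] at hp
          exact hmins p hp.1 hp.2
      rcases htame n with ⟨j, hFn⟩ | hsubfam
      · -- CASE 1 : F n = Ak j
        have hinj : Function.Injective (fun l : Fin k' => (G l).min' (hGne l)) := by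
          intro l l' he
          by_contra hne
          rcases lt_or_gt_of_ne hne with hlt | hlt
          · have h := mino_lt_mino (hGorder l l' hlt) (hGne l) (hGne l')
            rw [mino_eq_min' (hGne l), mino_eq_min' (hGne l')] at h
            exact absurd he (ne_of_lt h)
          · have h := mino_lt_mino (hGorder l' l hlt) (hGne l') (hGne l)
            rw [mino_eq_min' (hGne l'), mino_eq_min' (hGne l)] at h
            exact absurd he.symm (ne_of_lt h)
        have hk'j : k' ≤ j := by
          have hcard : (Finset.univ.image fun l : Fin k' => (G l).min' (hGne l)).card = k' := by
            rw [Finset.card_image_of_injective _ hinj, Finset.card_univ, Fintype.card_fin]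
          have hmem := hGmins
          rw [hFn] at hmem
          have : (Finset.univ.image fun l : Fin k' => (G l).min' (hGne l)).card ≤ j := hmem
          omega
        have hAkmem : ∀ M : Finset ℕ, M.card ≤ j → M ∈ F n := by
          intro M hMc
          rw [hFn]
          exact hMc
        have wrapAk : ∀ s : Finset ℕ, s ⊆ Finset.range (3 * k') → s.card ≤ j →
            t n * ∑ p ∈ s, mixedNorm t F m (restrF (W p) Y) ≤
              mixedNorm t F (m + 1) (restrF (s.biUnion W) Y) := by
          intro s hs hcard
          apply wrap s (s.image (fun p => mino (W p))) hs
          · exact hAkmem _ (le_trans Finset.card_image_le hcard)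
          · intro p hp _
            exact Finset.mem_image_of_mem _ hp
        set C1 := Finset.Ico 0 k' with hC1
        set C2 := Finset.Ico k' (2 * k') with hC2
        set C3 := Finset.Ico (2 * k') (3 * k') with hC3
        have hC1s : C1 ⊆ Finset.range (3 * k') := by
          intro p hp
          rw [hC1, Finset.mem_Ico] at hp
          rw [Finset.mem_range]
          omega
        have hC2s : C2 ⊆ Finset.range (3 * k') := by
          intro p hp
          rw [hC2, Finset.mem_Ico] at hp
          rw [Finset.mem_range]
          omega
        have hC3s : C3 ⊆ Finset.range (3 * k') := by
          intro p hp
          rw [hC3, Finset.mem_Ico] at hp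
          rw [Finset.mem_range]
          omega
        have hC1c : C1.card ≤ j := by rw [hC1, Nat.card_Ico]; omega
        have hC2c : C2.card ≤ j := by rw [hC2, Nat.card_Ico]; omega
        have hC3c : C3.card ≤ j := by rw [hC3, Nat.card_Ico]; omega
        have hsplit : ∑ p ∈ Finset.range (3 * k'), mixedNorm t F m (restrF (W p) Y) =
            ∑ p ∈ C1, mixedNorm t F m (restrF (W p) Y) +
            ∑ p ∈ C2, mixedNorm t F m (restrF (W p) Y) +
            ∑ p ∈ C3, mixedNorm t F m (restrF (W p) Y) := by
          rw [hC1, hC2, hC3, Finset.range_eq_Ico,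
            ← Finset.sum_Ico_consecutive _ (by omega : 0 ≤ k') (by omega : k' ≤ 3 * k'),
            ← Finset.sum_Ico_consecutive _ (by omega : k' ≤ 2 * k')
              (by omega : 2 * k' ≤ 3 * k')]
          ring
        calc t n * ∑ l : Fin k', mixedNorm t F m (restrF (G l) X)
            ≤ t n * ∑ p ∈ Finset.range (3 * k'), mixedNorm t F m (restrF (W p) Y) :=
              mul_le_mul_of_nonneg_left hsum2 (le_of_lt (ht n).1)
          _ = t n * ∑ p ∈ C1, mixedNorm t F m (restrF (W p) Y) +
              t n * ∑ p ∈ C2, mixedNorm t F m (restrF (W p) Y) +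
              t n * ∑ p ∈ C3, mixedNorm t F m (restrF (W p) Y) := by
              rw [hsplit]; ring
          _ ≤ mixedNorm t F (m + 1) (restrF (C1.biUnion W) Y) +
              mixedNorm t F (m + 1) (restrF (C2.biUnion W) Y) +
              mixedNorm t F (m + 1) (restrF (C3.biUnion W) Y) :=
              add_le_add (add_le_add (wrapAk C1 hC1s hC1c) (wrapAk C2 hC2s hC2c))
                (wrapAk C3 hC3s hC3c)
          _ ≤ A := by
              have hl12 : FinsetLT (C1.biUnion W) (C2.biUnion W) := by
                apply hLTU C1 C2 hC1s hC2s
                intro p hp q hq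
                rw [hC1, Finset.mem_Ico] at hp
                rw [hC2, Finset.mem_Ico] at hq
                omega
              have hl23 : FinsetLT (C2.biUnion W) (C3.biUnion W) := by
                apply hLTU C2 C3 hC2s hC3s
                intro p hp q hq
                rw [hC2, Finset.mem_Ico] at hp
                rw [hC3, Finset.mem_Ico] at hq
                omega
              have hl13 : FinsetLT (C1.biUnion W) (C3.biUnion W) := by
                apply hLTU C1 C3 hC1s hC3s
                intro p hp q hq
                rw [hC1, Finset.mem_Ico] at hp
                rw [hC3, Finset.mem_Ico] at hq
                omega
              exact hgA ((C1.biUnion W, C2.biUnion W), C3.biUnion W)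
                (hPmem' _ _ _ (hUsub C1) (hUsub C2) (hUsub C3) hl12 hl23 hl13)
      · -- CASE 2 : F n [A_3] ⊆ (F n, F n)
        set s₀ := (Finset.Ico 1 (3 * k')).filter (fun p => (W p).Nonempty) with hs₀
        have hs₀sub : s₀ ⊆ Finset.range (3 * k') := by
          intro p hp
          rw [hs₀, Finset.mem_filter, Finset.mem_Ico] at hp
          rw [Finset.mem_range]
          omega
        have hs₀ne : ∀ p ∈ s₀, (W p).Nonempty := fun p hp => (Finset.mem_filter.mp hp).2
        have hs₀1 : ∀ p ∈ s₀, 1 ≤ p := by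
          intro p hp
          rw [hs₀, Finset.mem_filter, Finset.mem_Ico] at hp
          omega
        set V : ℕ → Finset ℕ := fun l =>
          ((Finset.Ico (3 * l + 1) (3 * l + 4)).filter (fun p => (W p).Nonempty)).image
            (fun p => mino (W p)) with hV
        have hVmem : ∀ (l : ℕ) (x : ℕ), x ∈ V l ↔
            ∃ p, (3 * l + 1 ≤ p ∧ p < 3 * l + 4) ∧ (W p).Nonempty ∧ x = mino (W p) := by
          intro l x
          rw [hV]
          simp only [Finset.mem_image, Finset.mem_filter, Finset.mem_Ico]
          constructor
          · rintro ⟨p, ⟨⟨h1, h2⟩, h3⟩, rfl⟩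
            exact ⟨p, ⟨h1, h2⟩, h3, rfl⟩
          · rintro ⟨p, ⟨h1, h2⟩, h3, rfl⟩
            exact ⟨p, ⟨⟨h1, h2⟩, h3⟩, rfl⟩
        have hVord : ∀ l l' : ℕ, l < l' → FinsetLT (V l) (V l') := by
          intro l l' hll x hx y hy
          obtain ⟨p, ⟨hp1, hp2⟩, hpne, rfl⟩ := (hVmem l x).mp hx
          obtain ⟨q, ⟨hq1, hq2⟩, hqne, rfl⟩ := (hVmem l' y).mp hy
          have hpq : p < q := by omega
          exact hWord p (Finset.mem_range.mpr (hWne_lt p hpne)) q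
            (Finset.mem_range.mpr (hWne_lt q hqne)) hpq _ (mino_mem hpne) _ (mino_mem hqne)
        have hV3 : ∀ l : ℕ, V l ∈ Ak 3 := by
          intro l
          show (V l).card ≤ 3
          rw [hV]
          refine le_trans Finset.card_image_le (le_trans (Finset.card_filter_le _ _) ?_)
          rw [Nat.card_Ico]
          omega
        set Gn : ℕ → Finset ℕ := fun p => if h : p < k' then G ⟨p, h⟩ else ∅ with hGnd
        have hminsV : (((Finset.range k').filter fun l => (V l).Nonempty).image
            fun l => mino (V l)) ∈ F n := by
          set s₂ := (Finset.range k').filter (fun l => (V l).Nonempty) with hs₂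
          have hs₂sub : s₂ ⊆ Finset.range k' := Finset.filter_subset _ _
          apply spread_mino_mem (hreg n).2.1 s₂ Gn V
          · intro l hl
            have := Finset.mem_range.mp (hs₂sub hl)
            rw [hGnd]
            simp only [dif_pos this]
            exact hGne _
          · exact fun l hl => (Finset.mem_filter.mp hl).2
          · intro l hl q hq h
            have hlk := Finset.mem_range.mp (hs₂sub hl)
            have hqk := Finset.mem_range.mp (hs₂sub hq)
            rw [hGnd]
            simp only [dif_pos hlk, dif_pos hqk]
            exact hGorder _ _ (Fin.lt_def.mpr h)
          · exact fun l hl q hq h => hVord l q h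
          · intro l hl
            have hlk := Finset.mem_range.mp (hs₂sub hl)
            have hVne : (V l).Nonempty := (Finset.mem_filter.mp hl).2
            apply le_mino hVne
            intro x hx
            obtain ⟨p, ⟨hp1, hp2⟩, hpne, rfl⟩ := (hVmem l x).mp hx
            have hk := keyW ⟨l, hlk⟩ p (by exact hp1) (by exact (show p ≤ 3 * l + 3 by omega)) hpne
            rw [hGnd]
            simp only [dif_pos hlk]
            exact hk
          · exact hered_mem (hreg n).1
              (adm_mino_image_mem (Fam := F n) hGne' hGorder hGmins)
              (Finset.image_subset_image hs₂sub)
        have hVcomb : (Finset.range k').biUnion V ∈ comb (F n) (Ak 3) :=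
          comb_mem_of_blocks V (Finset.range k') (fun l _ q _ h => hVord l q h)
            (fun l _ => hV3 l) hminsV
        set Amin := s₀.image (fun p => mino (W p)) with hAmin
        have hbiU : (Finset.range k').biUnion V = Amin := by
          ext x
          rw [hAmin]
          simp only [Finset.mem_biUnion, Finset.mem_image, Finset.mem_range]
          constructor
          · rintro ⟨l, hl, hx⟩
            obtain ⟨p, ⟨hp1, hp2⟩, hpne, rfl⟩ := (hVmem l x).mp hx
            refine ⟨p, ?_, rfl⟩
            rw [hs₀, Finset.mem_filter, Finset.mem_Ico]
            exact ⟨⟨by omega, hWne_lt p hpne⟩, hpne⟩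
          · rintro ⟨p, hp, rfl⟩
            have hpne := hs₀ne p hp
            have hp1 := hs₀1 p hp
            have hplt := hWne_lt p hpne
            refine ⟨(p - 1) / 3, by omega, ?_⟩
            rw [hVmem]
            exact ⟨p, ⟨by omega, by omega⟩, hpne, rfl⟩
        rw [hbiU] at hVcomb
        obtain ⟨B, hB, C, hC, hBC, hBCeq⟩ := hsubfam hVcomb
        set sB := s₀.filter (fun p => mino (W p) ∈ B) with hsB
        set sC := s₀.filter (fun p => mino (W p) ∉ B) with hsC
        have hsBC : ∀ p ∈ sC, mino (W p) ∈ C := by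
          intro p hp
          rw [hsC, Finset.mem_filter] at hp
          have hm : mino (W p) ∈ Amin := by
            rw [hAmin]
            exact Finset.mem_image_of_mem _ hp.1
          rw [hBCeq] at hm
          rcases Finset.mem_union.mp hm with h | h
          · exact absurd h hp.2
          · exact h
        have hf0 : t n * mixedNorm t F m (restrF (W 0) Y) ≤
            mixedNorm t F (m + 1) (restrF (W 0) Y) :=
          le_trans (mul_le_of_le_one_left (mixedNorm_nonneg ht m _) (le_of_lt (ht n).2))
            (mixedNorm_le_succ m _)
        have wrapB : t n * ∑ p ∈ sB, mixedNorm t F m (restrF (W p) Y) ≤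
            mixedNorm t F (m + 1) (restrF (sB.biUnion W) Y) := by
          apply wrap sB B (subset_trans (Finset.filter_subset _ _) hs₀sub) hB
          intro p hp _
          rw [hsB, Finset.mem_filter] at hp
          exact hp.2
        have wrapC : t n * ∑ p ∈ sC, mixedNorm t F m (restrF (W p) Y) ≤
            mixedNorm t F (m + 1) (restrF (sC.biUnion W) Y) := by
          apply wrap sC C (subset_trans (Finset.filter_subset _ _) hs₀sub) hC
          intro p hp _
          exact hsBC p hp
        have hsplit0 : ∑ p ∈ Finset.range (3 * k'), mixedNorm t F m (restrF (W p) Y) =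
            mixedNorm t F m (restrF (W 0) Y) +
            ∑ p ∈ Finset.Ico 1 (3 * k'), mixedNorm t F m (restrF (W p) Y) := by
          rw [Finset.range_eq_Ico,
            ← Finset.sum_Ico_consecutive _ (by omega : (0:ℕ) ≤ 1) (by omega : 1 ≤ 3 * k')]
          congr 1
          rw [← Finset.range_eq_Ico, Finset.sum_range_one]
        have hsplit1 : ∑ p ∈ Finset.Ico 1 (3 * k'), mixedNorm t F m (restrF (W p) Y) =
            ∑ p ∈ s₀, mixedNorm t F m (restrF (W p) Y) := by
          rw [hs₀]
          symm
          apply Finset.sum_filter_of_ne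
          intro p _ hp0
          by_contra hemp
          rw [Finset.not_nonempty_iff_eq_empty.mp hemp, restrF_empty,
            mixedNorm_zero ht] at hp0
          exact hp0 rfl
        have hsplit2 : ∑ p ∈ s₀, mixedNorm t F m (restrF (W p) Y) =
            ∑ p ∈ sB, mixedNorm t F m (restrF (W p) Y) +
            ∑ p ∈ sC, mixedNorm t F m (restrF (W p) Y) := by
          rw [hsB, hsC]
          exact (Finset.sum_filter_add_sum_filter_not s₀ _ _).symm
        have hWB : FinsetLT (W 0) (sB.biUnion W) := by
          intro x hx y hy
          obtain ⟨q, hq, hyq⟩ := Finset.mem_biUnion.mp hy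
          have hq₀ : q ∈ s₀ := Finset.filter_subset _ _ hq
          exact hWord 0 (Finset.mem_range.mpr (by omega)) q (hs₀sub hq₀)
            (by have := hs₀1 q hq₀; omega) x hx y hyq
        have hWC : FinsetLT (W 0) (sC.biUnion W) := by
          intro x hx y hy
          obtain ⟨q, hq, hyq⟩ := Finset.mem_biUnion.mp hy
          have hq₀ : q ∈ s₀ := Finset.filter_subset _ _ hq
          exact hWord 0 (Finset.mem_range.mpr (by omega)) q (hs₀sub hq₀)
            (by have := hs₀1 q hq₀; omega) x hx y hyq
        have hBCU : FinsetLT (sB.biUnion W) (sC.biUnion W) := by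
          intro x hx y hy
          obtain ⟨p, hp, hxp⟩ := Finset.mem_biUnion.mp hx
          obtain ⟨q, hq, hyq⟩ := Finset.mem_biUnion.mp hy
          have hp₀ : p ∈ s₀ := Finset.filter_subset _ _ hp
          have hq₀ : q ∈ s₀ := Finset.filter_subset _ _ hq
          have hpB : mino (W p) ∈ B := by
            rw [hsB, Finset.mem_filter] at hp
            exact hp.2
          have hqC : mino (W q) ∈ C := hsBC q hq
          have hpq : p < q := by
            rcases lt_trichotomy p q with h | h | h
            · exact h
            · exfalso
              rw [hsC, Finset.mem_filter] at hq
              rw [h] at hpB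
              exact hq.2 hpB
            · exfalso
              have h1 := hWord q (hs₀sub hq₀) p (hs₀sub hp₀) h _
                (mino_mem (hs₀ne q hq₀)) _ (mino_mem (hs₀ne p hp₀))
              have h2 := hBC _ hpB _ hqC
              omega
          exact hWord p (hs₀sub hp₀) q (hs₀sub hq₀) hpq x hxp y hyq
        calc t n * ∑ l : Fin k', mixedNorm t F m (restrF (G l) X)
            ≤ t n * ∑ p ∈ Finset.range (3 * k'), mixedNorm t F m (restrF (W p) Y) :=
              mul_le_mul_of_nonneg_left hsum2 (le_of_lt (ht n).1)
          _ = t n * mixedNorm t F m (restrF (W 0) Y) +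
              t n * ∑ p ∈ sB, mixedNorm t F m (restrF (W p) Y) +
              t n * ∑ p ∈ sC, mixedNorm t F m (restrF (W p) Y) := by
              rw [hsplit0, hsplit1, hsplit2]; ring
          _ ≤ mixedNorm t F (m + 1) (restrF (W 0) Y) +
              mixedNorm t F (m + 1) (restrF (sB.biUnion W) Y) +
              mixedNorm t F (m + 1) (restrF (sC.biUnion W) Y) :=
              add_le_add (add_le_add hf0 wrapB) wrapC
          _ ≤ A :=
              hgA ((W 0, sB.biUnion W), sC.biUnion W)
                (hPmem' _ _ _ (hWsubY 0) (hUsub sB) (hUsub sC) hWB hBCU hWC)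

/-- placeholder -/
lemma placeholder : True := trivial
/-- in a mixed Tsirelson space whose families satisfy `F_n = A_j` or
`F_n[A_3] ⊆ (F_n)²`, every subsequence `(e_{i_k})` of the basis is equivalent to its left shift
`(e_{i_{k+1}})`, via the three-set splitting of the `m`-th norms. -/
theorem statement11 (t : ℕ → ℝ) (F : ℕ → Set (Finset ℕ))
    (ht : ∀ n, 0 < t n ∧ t n < 1) (hmono : Antitone t) (ht0 : Tendsto t atTop (𝓝 0))
    (hreg : ∀ n, IsRegular (F n))
    (htame : ∀ n, (∃ j : ℕ, F n = Ak j) ∨ comb (F n) (Ak 3) ⊆ pairFam (F n) (F n))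
    (i : ℕ → ℕ) (hi : StrictMono i) (a : ℕ →₀ ℝ) :
    (∀ m : ℕ, ∃ E₁ E₂ E₃ : Finset ℕ, FinsetLT E₁ E₂ ∧ FinsetLT E₂ E₃ ∧
      mixedNorm t F m (Finsupp.mapDomain (fun k => i (k + 1)) a) ≤
        mixedNorm t F m (restrF E₁ (Finsupp.mapDomain i a)) +
        mixedNorm t F m (restrF E₂ (Finsupp.mapDomain i a)) +
        mixedNorm t F m (restrF E₃ (Finsupp.mapDomain i a))) ∧
    ∃ K : ℝ, 0 < K ∧ ∀ c : ℕ →₀ ℝ,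
      tsNorm t F (Finsupp.mapDomain (fun k => i (k + 1)) c) ≤
        K * tsNorm t F (Finsupp.mapDomain i c) ∧
      tsNorm t F (Finsupp.mapDomain i c) ≤
        K * tsNorm t F (Finsupp.mapDomain (fun k => i (k + 1)) c) := by
  have hσ : StrictMono (fun q => i (q + 1)) := fun p q h => hi (by omega)
  have hbdd : ∀ z : ℕ →₀ ℝ, BddAbove (Set.range fun m => mixedNorm t F m z) := by
    intro z
    exact ⟨l1 z, by rintro x ⟨m, rfl⟩; exact mixedNorm_le_l1 ht m z⟩
  have hts_le : ∀ (z : ℕ →₀ ℝ) (m : ℕ), mixedNorm t F m z ≤ tsNorm t F z :=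
    fun z m => le_ciSup (hbdd z) m
  have hts_nonneg : ∀ z, 0 ≤ tsNorm t F z := fun z =>
    le_trans (mixedNorm_nonneg ht 0 z) (hts_le z 0)
  constructor
  · intro m
    obtain ⟨E₁, E₂, E₃, l12, l23, _, _, _, _, hbd⟩ := main_claim ht hreg htame hi m a
    exact ⟨E₁, E₂, E₃, l12, l23, hbd⟩
  · refine ⟨3, by norm_num, ?_⟩
    intro c
    constructor
    · apply ciSup_le
      intro m
      obtain ⟨E₁, E₂, E₃, _, _, _, _, _, _, hbd⟩ := main_claim ht hreg htame hi m c
      have hr : ∀ E : Finset ℕ,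
          mixedNorm t F m (restrF E (Finsupp.mapDomain i c)) ≤
            tsNorm t F (Finsupp.mapDomain i c) :=
        fun E => le_trans (mixedNorm_restr_le ht E m _) (hts_le _ m)
      calc mixedNorm t F m (Finsupp.mapDomain (fun k => i (k + 1)) c)
          ≤ mixedNorm t F m (restrF E₁ (Finsupp.mapDomain i c)) +
            mixedNorm t F m (restrF E₂ (Finsupp.mapDomain i c)) +
            mixedNorm t F m (restrF E₃ (Finsupp.mapDomain i c)) := hbd
        _ ≤ tsNorm t F (Finsupp.mapDomain i c) + tsNorm t F (Finsupp.mapDomain i c) +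
            tsNorm t F (Finsupp.mapDomain i c) :=
            add_le_add (add_le_add (hr E₁) (hr E₂)) (hr E₃)
        _ = 3 * tsNorm t F (Finsupp.mapDomain i c) := by ring
    · have h1 : tsNorm t F (Finsupp.mapDomain i c) ≤
          tsNorm t F (Finsupp.mapDomain (fun k => i (k + 1)) c) := by
        apply ciSup_le
        intro m
        exact le_trans
          (mixedNorm_spread_mono ht hreg hi hσ
            (fun q => le_of_lt (hi (Nat.lt_succ_self q))) m c)
          (hts_le _ m)
      calc tsNorm t F (Finsupp.mapDomain i c)
          ≤ tsNorm t F (Finsupp.mapDomain (fun k => i (k + 1)) c) := h1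
        _ ≤ 3 * tsNorm t F (Finsupp.mapDomain (fun k => i (k + 1)) c) := by
            nlinarith [hts_nonneg (Finsupp.mapDomain (fun k => i (k + 1)) c)]

end LT2003
end

section
/- Let F be a regular family and M = (p_k) an infinite subset of ℕ. Then the family ^M F = {F' ⊆ ℕ finite : (p_k)_{k∈F'} ∈ F} is regular. -/
open Filter Topology

namespace LT2003

variable {B : Type*}

/-- if `F` is regular and `M = (p_k)` is an infinite subset of ℕ (given by its
strictly increasing enumeration `p`), then `^M F = {F' : (p_k)_{k ∈ F'} ∈ F}` is regular. -/
theorem statement15 (F : Set (Finset ℕ)) (hF : IsRegular F) (p : ℕ → ℕ) (hp : StrictMono p) :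
    IsRegular {A : Finset ℕ | A.image p ∈ F} := by
  obtain ⟨hHer, hSpr, hCpt⟩ := hF
  have hpinj := hp.injective
  refine ⟨fun A hA B hB => hHer _ hA _ (Finset.image_subset_image hB), ?_, ?_⟩
  · rintro A hA G ⟨f, hmono, hle, rfl⟩
    simp only [Set.mem_setOf_eq] at hA ⊢
    set g : ℕ → ℕ := p ∘ f ∘ Function.invFun p with hg
    have hgp : ∀ a, g (p a) = p (f a) := by
      intro a
      simp [hg, Function.leftInverse_invFun hpinj a]
    have key : (A.image f).image p = (A.image p).image g := by
      rw [Finset.image_image, Finset.image_image]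
      apply Finset.image_congr
      intro a _
      exact (hgp a).symm
    rw [key]
    refine hSpr _ hA _ ⟨g, ?_, ?_, rfl⟩
    · rintro x hx y hy hxy
      simp only [Finset.coe_image, Set.mem_image, Finset.mem_coe] at hx hy
      obtain ⟨a, ha, rfl⟩ := hx
      obtain ⟨b, hb, rfl⟩ := hy
      rw [hgp a, hgp b]
      exact hp (hmono ha hb (hp.lt_iff_lt.mp hxy))
    · intro x hx
      simp only [Finset.mem_image] at hx
      obtain ⟨a, ha, rfl⟩ := hx
      rw [hgp a]
      exact hp.monotone (hle a ha)
  · classical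
    unfold IsCompactFam
    set Φ : (ℕ → Bool) → (ℕ → Bool) := fun x n =>
      if h : ∃ k, p k = n then x h.choose else false with hΦ
    have hΦapp : ∀ (x : ℕ → Bool) (k : ℕ), Φ x (p k) = x k := by
      intro x k
      have h : ∃ k', p k' = p k := ⟨k, rfl⟩
      simp only [hΦ, dif_pos h]
      exact congrArg x (hpinj h.choose_spec)
    have hΦcont : Continuous Φ := by
      apply continuous_pi
      intro n
      by_cases h : ∃ k, p k = n
      · simpa only [hΦ, dif_pos h] using continuous_apply h.choose
      · simpa only [hΦ, dif_neg h] using (continuous_const : Continuous fun _ : ℕ → Bool => false)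
    have hΦemb : ∀ A : Finset ℕ, Φ (famEmbed A) = famEmbed (A.image p) := by
      intro A
      funext n
      by_cases h : ∃ k, p k = n
      · obtain ⟨k, rfl⟩ := h
        rw [hΦapp]
        simp [famEmbed, hpinj.eq_iff]
      · simp only [hΦ, dif_neg h, famEmbed]
        symm
        simp only [decide_eq_false_iff_not, Finset.mem_image, not_exists]
        rintro a ⟨_, rfl⟩
        exact h ⟨a, rfl⟩
    have hset : famEmbed '' {A : Finset ℕ | A.image p ∈ F} = Φ ⁻¹' (famEmbed '' F) := by
      ext x
      constructor
      · rintro ⟨A, hA, rfl⟩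
        exact ⟨A.image p, hA, (hΦemb A).symm⟩
      · rintro ⟨B, hB, hxB⟩
        set A : Finset ℕ := B.preimage p hpinj.injOn with hA
        have hxA : x = famEmbed A := by
          funext k
          have h1 : Φ x (p k) = famEmbed B (p k) := by rw [hxB]
          rw [hΦapp] at h1
          rw [h1]
          simp [famEmbed, hA]
        refine ⟨A, ?_, hxA.symm⟩
        refine hHer _ hB _ ?_
        intro n hn
        simp only [Finset.mem_image] at hn
        obtain ⟨a, ha, rfl⟩ := hn
        simpa [hA] using ha
    rw [hset]
    exact (hCpt.isClosed.preimage hΦcont).isCompact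

end LT2003
end
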